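/- arXiv:2408.03640 — 3 statements merged into one kernel-verified Lean document; each statement's English description precedes it below -/
import Mathlib

section
/- Let f ∈ L¹(ℝⁿ) be smooth (n ≥ 2), L(f) the logarithmic potential, and α = (2/((n-1)!·|Sⁿ|)) ∫ f. For any fixed r₀ > 0, the average of L(f) over the ball B_{r₀}(x) satisfies (1/|B_{r₀}(x)|) ∫_{B_{r₀}(x)} L(f)(y) dy = (-α + o(1)) log|x| as |x| → ∞. -/
open MeasureTheory Filter Real Set Metric
open scoped ENNReal NNReal

noncomputable section

abbrev Eucl (n : ℕ) := EuclideanSpace ℝ (Fin n)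

/-- The Euclidean Laplacian. -/
noncomputable def lap {n : ℕ} (f : Eucl n → ℝ) (x : Eucl n) : ℝ :=
  ∑ i : Fin n, iteratedFDeriv ℝ 2 f x ![EuclideanSpace.single i 1, EuclideanSpace.single i 1]

noncomputable def negLap {n : ℕ} (f : Eucl n → ℝ) : Eucl n → ℝ := fun x => -(lap f x)

/-- Half Laplacian `(-Δ)^(1/2)` via principal value. -/
noncomputable def halfLap {n : ℕ} (f : Eucl n → ℝ) (x : Eucl n) : ℝ :=
  limUnder (nhdsWithin (0:ℝ) (Ioi 0)) fun ε =>
    (Real.Gamma (((n:ℝ)+1)/2) / Real.pi ^ (((n:ℝ)+1)/2)) *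
      ∫ y in {y : Eucl n | ε ≤ dist x y}, (f x - f y) / dist x y ^ (n+1)

/-- `(-Δ)^(m/2)`, defined for odd `m` via the half Laplacian. -/
noncomputable def fracLapPow {n : ℕ} (m : ℕ) (f : Eucl n → ℝ) : Eucl n → ℝ :=
  if Even m then negLap^[m/2] f else halfLap (negLap^[m/2] f)

/-- Volume of the standard round sphere `S^n`. -/
noncomputable def sphereVol (n : ℕ) : ℝ :=
  2 * Real.pi ^ (((n:ℝ)+1)/2) / Real.Gamma (((n:ℝ)+1)/2)

/-- The logarithmic potential `𝓛(f)`. -/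
noncomputable def logPot (n : ℕ) (f : Eucl n → ℝ) (x : Eucl n) : ℝ :=
  (2 / (((n-1).factorial : ℝ) * sphereVol n)) * ∫ y, Real.log (‖y‖ / ‖x - y‖) * f y

/-- Completeness of the conformal metric `e^{2u}|dx|^2`: every `C^1` curve going off to
infinity has infinite length. -/
def ConfComplete {n : ℕ} (u : Eucl n → ℝ) : Prop :=
  ∀ γ : ℝ → Eucl n, ContDiff ℝ 1 γ →
    Tendsto (fun t => ‖γ t‖) atTop atTop →
    (∫⁻ t in Set.Ici (0:ℝ), ENNReal.ofReal (Real.exp (u (γ t)) * ‖deriv γ t‖)) = ⊤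

/-- `φ` is (given by) a polynomial of total degree at most `D`. -/
def IsPolyDeg {n : ℕ} (φ : Eucl n → ℝ) (D : ℕ) : Prop :=
  ∃ p : MvPolynomial (Fin n) ℝ, p.totalDegree ≤ D ∧
    ∀ x : Eucl n, φ x = MvPolynomial.eval (fun i => x i) p


lemma neg_log_le_shell {w : ℝ} {k : ℕ} (h : (1/2:ℝ)^(k+1) ≤ w) :
    -Real.log w ≤ (k+1 : ℝ) := by
  have h0 : (0:ℝ) < (1/2:ℝ)^(k+1) := by positivity
  have h1 : Real.log ((1/2:ℝ)^(k+1)) ≤ Real.log w := Real.log_le_log h0 h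
  have hlog : Real.log ((1/2:ℝ)^(k+1)) = -((k+1:ℝ) * Real.log 2) := by
    rw [Real.log_pow]
    push_cast
    rw [Real.log_div one_ne_zero two_ne_zero, Real.log_one]
    ring
  have h2 : Real.log 2 ≤ 1 := by
    have := Real.log_le_sub_one_of_pos (by norm_num : (0:ℝ) < 2)
    linarith
  have hk : (0:ℝ) ≤ k := Nat.cast_nonneg k
  nlinarith

lemma kappa_lt_top (n : ℕ) (hn : 2 ≤ n) :
    ∫⁻ w in ball (0 : Eucl n) 1, ENNReal.ofReal (-Real.log ‖w‖) < ⊤ := by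
  have hnt : Nontrivial (Eucl n) := by
    have : Nonempty (Fin n) := ⟨⟨0, by omega⟩⟩
    infer_instance
  set A : ℕ → Set (Eucl n) := fun k => ball (0:Eucl n) ((1/2)^k) \ ball 0 ((1/2)^(k+1)) with hA
  have hsub : ball (0 : Eucl n) 1 ⊆ {0} ∪ ⋃ k, A k := by
    intro w hw
    rcases eq_or_ne w 0 with h | h
    · exact Or.inl h
    · right
      have hw0 : 0 < ‖w‖ := norm_pos_iff.2 h
      have hw1 : ‖w‖ < 1 := mem_ball_zero_iff.1 hw
      have hex : ∃ k : ℕ, (1/2:ℝ)^k ≤ ‖w‖ := by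
        obtain ⟨k, hk⟩ := exists_pow_lt_of_lt_one hw0 (by norm_num : (1/2:ℝ) < 1)
        exact ⟨k, hk.le⟩
      set k := Nat.find hex with hkdef
      have hk : (1/2:ℝ)^k ≤ ‖w‖ := Nat.find_spec hex
      have hkpos : k ≠ 0 := by
        intro h0
        rw [h0] at hk; simp at hk; linarith
      obtain ⟨m, hm⟩ := Nat.exists_eq_succ_of_ne_zero hkpos
      rw [Nat.succ_eq_add_one] at hm
      rw [hm] at hk
      refine mem_iUnion.2 ⟨m, ?_, ?_⟩
      · have : ¬ ((1/2:ℝ)^m ≤ ‖w‖) := Nat.find_min hex (by omega)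
        exact mem_ball_zero_iff.2 (by linarith)
      · intro hmem
        have := mem_ball_zero_iff.1 hmem
        linarith
  have hmono := lintegral_mono_set (μ := volume) (f := fun w : Eucl n => ENNReal.ofReal (-Real.log ‖w‖)) hsub
  refine lt_of_le_of_lt hmono ?_
  refine lt_of_le_of_lt (lintegral_union_le _ _ _) ?_
  have h0 : ∫⁻ w in ({0} : Set (Eucl n)), ENNReal.ofReal (-Real.log ‖w‖) = 0 :=
    setLIntegral_measure_zero _ _ (measure_singleton 0)
  rw [h0, zero_add]
  refine lt_of_le_of_lt (lintegral_iUnion_le _ _) ?_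
  have hterm : ∀ k : ℕ, (∫⁻ w in A k, ENNReal.ofReal (-Real.log ‖w‖))
      ≤ (2⁻¹ : ℝ≥0∞)^k * volume (ball (0:Eucl n) 1) := by
    intro k
    have hb : (∫⁻ w in A k, ENNReal.ofReal (-Real.log ‖w‖))
        ≤ ∫⁻ _ in A k, ((k:ℝ≥0∞)+1) := by
      refine setLIntegral_mono (by fun_prop) ?_
      intro w hw
      have hlow : (1/2:ℝ)^(k+1) ≤ ‖w‖ := by
        have := hw.2
        rw [mem_ball_zero_iff] at this
        push_neg at this; exact this
      calc ENNReal.ofReal (-Real.log ‖w‖) ≤ ENNReal.ofReal ((k:ℝ)+1) :=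
            ENNReal.ofReal_le_ofReal (neg_log_le_shell hlow)
        _ = (k:ℝ≥0∞)+1 := by
            rw [ENNReal.ofReal_add (by positivity) zero_le_one]
            simp
    rw [setLIntegral_const] at hb
    have hAsub : volume (A k) ≤ volume (ball (0:Eucl n) ((1/2:ℝ)^k)) :=
      measure_mono diff_subset
    have hball : volume (ball (0:Eucl n) ((1/2:ℝ)^k))
        = ENNReal.ofReal (((1/2:ℝ)^k) ^ n) * volume (ball (0:Eucl n) 1) := by
      rw [Measure.addHaar_ball volume 0 (by positivity)]
      congr 2
      rw [finrank_euclideanSpace_fin]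
    refine hb.trans ?_
    calc ((k:ℝ≥0∞)+1) * volume (A k)
        ≤ (2:ℝ≥0∞)^k * (ENNReal.ofReal (((1/2:ℝ)^k) ^ n) * volume (ball (0:Eucl n) 1)) := by
          refine mul_le_mul ?_ (hAsub.trans (hball.le)) (zero_le) (zero_le)
          have hnat : (k+1 : ℕ) ≤ 2^k := Nat.lt_two_pow_self (n := k)
          calc (k:ℝ≥0∞)+1 = ((k+1 : ℕ) : ℝ≥0∞) := by push_cast; ring
            _ ≤ ((2^k : ℕ) : ℝ≥0∞) := by exact_mod_cast hnat
            _ = (2:ℝ≥0∞)^k := by push_cast; ring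
      _ ≤ (2⁻¹:ℝ≥0∞)^k * volume (ball (0:Eucl n) 1) := by
          rw [← mul_assoc]
          refine mul_le_mul ?_ le_rfl (zero_le) (zero_le)
          have h1 : ENNReal.ofReal (((1/2:ℝ)^k) ^ n) = (2⁻¹:ℝ≥0∞)^(k*n) := by
            rw [← pow_mul, ENNReal.ofReal_pow (by norm_num : (0:ℝ) ≤ 1/2)]
            norm_num [ENNReal.ofReal_div_of_pos]
          rw [h1]
          have h2 : (2⁻¹:ℝ≥0∞)^(k*n) ≤ (2⁻¹:ℝ≥0∞)^(2*k) :=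
            pow_le_pow_of_le_one (zero_le) (by simp)
              (by calc 2*k = k*2 := by ring
                    _ ≤ k*n := Nat.mul_le_mul_left k hn)
          calc (2:ℝ≥0∞)^k * (2⁻¹:ℝ≥0∞)^(k*n) ≤ (2:ℝ≥0∞)^k * (2⁻¹:ℝ≥0∞)^(2*k) :=
                mul_le_mul le_rfl h2 (zero_le) (zero_le)
            _ = (2⁻¹:ℝ≥0∞)^k := by
                rw [two_mul, pow_add, ← mul_assoc, ← mul_pow,
                  ENNReal.mul_inv_cancel (by norm_num) (by norm_num), one_pow, one_mul]
  refine lt_of_le_of_lt (ENNReal.tsum_le_tsum hterm) ?_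
  rw [ENNReal.tsum_mul_right, ENNReal.tsum_geometric]
  refine ENNReal.mul_lt_top ?_ measure_ball_lt_top
  rw [ENNReal.one_sub_inv_two]
  simp

lemma lint_neglog_translate (n : ℕ) (y : Eucl n) :
    (∫⁻ z in ball y 1, ENNReal.ofReal (-Real.log ‖z - y‖)) =
      ∫⁻ w in ball (0:Eucl n) 1, ENNReal.ofReal (-Real.log ‖w‖) := by
  rw [← lintegral_indicator measurableSet_ball, ← lintegral_indicator measurableSet_ball]
  have hmp := (measurePreserving_add_right (volume : Measure (Eucl n)) y).lintegral_comp
    (f := (ball y 1).indicator (fun z => ENNReal.ofReal (-Real.log ‖z - y‖)))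
    (by
      refine Measurable.indicator ?_ measurableSet_ball
      exact (Real.measurable_log.comp (measurable_norm.comp (measurable_id.sub_const y))).neg.ennreal_ofReal)
  rw [← hmp]
  congr 1
  funext w
  by_cases hw : w ∈ ball (0:Eucl n) 1
  · have hw' : w + y ∈ ball y 1 := by
      rw [mem_ball_zero_iff] at hw
      rw [mem_ball, dist_eq_norm]
      simpa using hw
    rw [indicator_of_mem hw', indicator_of_mem hw]
    simp
  · have hw' : w + y ∉ ball y 1 := by
      rw [mem_ball_zero_iff] at hw
      rw [mem_ball, dist_eq_norm]
      simpa using hw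
    rw [indicator_of_notMem hw', indicator_of_notMem hw]

lemma lint_neglog_set_le (n : ℕ) (s : Set (Eucl n)) (y : Eucl n) :
    (∫⁻ z in s, ENNReal.ofReal (-Real.log ‖z - y‖)) ≤
      ∫⁻ w in ball (0:Eucl n) 1, ENNReal.ofReal (-Real.log ‖w‖) := by
  rw [← lint_neglog_translate n y, ← lintegral_indicator (measurableSet_ball (x := y) (ε := 1))]
  refine le_trans ?_ (setLIntegral_le_lintegral s _)
  refine setLIntegral_mono (by
    refine Measurable.indicator ?_ measurableSet_ball
    exact (Real.measurable_log.comp (measurable_norm.comp (measurable_id.sub_const y))).neg.ennreal_ofReal) ?_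
  intro z _
  by_cases hz : z ∈ ball y 1
  · rw [indicator_of_mem hz]
  · rw [indicator_of_notMem hz]
    have : (1:ℝ) ≤ ‖z - y‖ := by
      rw [mem_ball, dist_eq_norm] at hz
      linarith [not_lt.1 hz]
    have : -Real.log ‖z - y‖ ≤ 0 := by
      have := Real.log_nonneg this
      linarith
    simp [ENNReal.ofReal_eq_zero.2 this]

lemma ofReal_max0 (t : ℝ) : ENNReal.ofReal (max 0 t) = ENNReal.ofReal t := by
  rcases le_total t 0 with h | h
  · rw [max_eq_left h, ENNReal.ofReal_zero, eq_comm, ENNReal.ofReal_eq_zero.2 h]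
  · rw [max_eq_right h]

lemma abs_log_le {u b : ℝ} (hu : 0 ≤ u) (hub : u ≤ b) :
    |Real.log u| ≤ max 0 (-Real.log u) + max 0 (Real.log b) := by
  rcases le_total (Real.log u) 0 with h | h
  · rw [abs_of_nonpos h]
    have : -Real.log u ≤ max 0 (-Real.log u) := le_max_right _ _
    linarith [le_max_left (0:ℝ) (Real.log b)]
  · rw [abs_of_nonneg h]
    rcases le_or_gt u 0 with h0 | h0
    · have hu0 : u = 0 := le_antisymm h0 hu
      rw [hu0, Real.log_zero]
      have h1 : (0:ℝ) ≤ max 0 (-Real.log 0) := le_max_left _ _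
      have h2 : (0:ℝ) ≤ max 0 (Real.log b) := le_max_left _ _
      rw [Real.log_zero] at h1
      linarith
    have hu1 : (1:ℝ) ≤ u := by
      by_contra hc
      push_neg at hc
      have := Real.log_neg h0 hc
      linarith
    have : Real.log u ≤ Real.log b := Real.log_le_log (by linarith) hub
    have : Real.log u ≤ max 0 (Real.log b) := le_trans this (le_max_right _ _)
    linarith [le_max_left (0:ℝ) (-Real.log u)]

lemma measurable_abslog_sub (n : ℕ) (c : Eucl n) :
    Measurable (fun y : Eucl n => |Real.log ‖y - c‖|) :=
  (Real.measurable_log.comp (measurable_norm.comp (measurable_id.sub_const c))).abs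

lemma lint_abslog_lt_top (n : ℕ) (hn : 2 ≤ n) (c : Eucl n) (ρ : ℝ) :
    (∫⁻ y in closedBall (0:Eucl n) ρ, ENNReal.ofReal |Real.log ‖y - c‖|) < ⊤ := by
  set b : ℝ := |ρ| + ‖c‖ with hb
  have hpt : ∀ y ∈ closedBall (0:Eucl n) ρ,
      ENNReal.ofReal |Real.log ‖y - c‖| ≤
        ENNReal.ofReal (-Real.log ‖y - c‖) + ENNReal.ofReal (max 0 (Real.log b)) := by
    intro y hy
    have hyb : ‖y - c‖ ≤ b := by
      have : ‖y‖ ≤ ρ := mem_closedBall_zero_iff.1 hy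
      have := norm_sub_le y c
      have : ρ ≤ |ρ| := le_abs_self ρ
      calc ‖y - c‖ ≤ ‖y‖ + ‖c‖ := norm_sub_le y c
        _ ≤ b := by rw [hb]; linarith [mem_closedBall_zero_iff.1 hy, le_abs_self ρ]
    calc ENNReal.ofReal |Real.log ‖y - c‖|
        ≤ ENNReal.ofReal (max 0 (-Real.log ‖y - c‖) + max 0 (Real.log b)) :=
          ENNReal.ofReal_le_ofReal (abs_log_le (norm_nonneg _) hyb)
      _ = ENNReal.ofReal (max 0 (-Real.log ‖y - c‖)) + ENNReal.ofReal (max 0 (Real.log b)) :=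
          ENNReal.ofReal_add (le_max_left _ _) (le_max_left _ _)
      _ = ENNReal.ofReal (-Real.log ‖y - c‖) + ENNReal.ofReal (max 0 (Real.log b)) := by
          rw [ofReal_max0]
  calc (∫⁻ y in closedBall (0:Eucl n) ρ, ENNReal.ofReal |Real.log ‖y - c‖|)
      ≤ ∫⁻ y in closedBall (0:Eucl n) ρ,
          (ENNReal.ofReal (-Real.log ‖y - c‖) + ENNReal.ofReal (max 0 (Real.log b))) :=
        setLIntegral_mono (by
          exact ((Real.measurable_log.comp (measurable_norm.comp
            (measurable_id.sub_const c))).neg.ennreal_ofReal.add measurable_const)) hpt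
    _ = (∫⁻ y in closedBall (0:Eucl n) ρ, ENNReal.ofReal (-Real.log ‖y - c‖))
        + ENNReal.ofReal (max 0 (Real.log b)) * volume (closedBall (0:Eucl n) ρ) := by
        rw [lintegral_add_right _ measurable_const, setLIntegral_const]
    _ < ⊤ := by
        refine ENNReal.add_lt_top.2 ⟨?_, ?_⟩
        · exact lt_of_le_of_lt (lint_neglog_set_le n _ c) (kappa_lt_top n hn)
        · exact ENNReal.mul_lt_top ENNReal.ofReal_lt_top measure_closedBall_lt_top

lemma integrableOn_abslog (n : ℕ) (hn : 2 ≤ n) (c : Eucl n) (ρ : ℝ) :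
    IntegrableOn (fun y : Eucl n => |Real.log ‖y - c‖|) (closedBall (0:Eucl n) ρ) volume := by
  refine ⟨(measurable_abslog_sub n c).aestronglyMeasurable, ?_⟩
  rw [hasFiniteIntegral_iff_norm]
  have : ∀ y : Eucl n, ENNReal.ofReal ‖|Real.log ‖y - c‖|‖ = ENNReal.ofReal |Real.log ‖y - c‖| := by
    intro y; rw [norm_abs_eq_norm, Real.norm_eq_abs]
  simp_rw [this]
  exact lint_abslog_lt_top n hn c ρ

lemma log_two_le_one : Real.log 2 ≤ 1 := by
  have := Real.log_le_sub_one_of_pos (by norm_num : (0:ℝ) < 2)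
  linarith

lemma abs_log_div_le {a c : ℝ} (ha : 0 < a) (h1 : a/2 ≤ c) (h2 : c ≤ 2*a) :
    |Real.log (a/c)| ≤ 1 := by
  have hc : 0 < c := lt_of_lt_of_le (by linarith) h1
  rw [abs_le]
  constructor
  · have hd : (1/2:ℝ) ≤ a/c := by
      rw [le_div_iff₀ hc]; linarith
    have := Real.log_le_log (by norm_num : (0:ℝ) < 1/2) hd
    have hl : Real.log (1/2) = -Real.log 2 := by
      rw [one_div, Real.log_inv]
    linarith [log_two_le_one]
  · have hd : a/c ≤ 2 := by
      rw [div_le_iff₀ hc]; linarith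
    have := Real.log_le_log (by positivity) hd
    linarith [log_two_le_one]

lemma abs_log_ratio_le_add {a c : ℝ} :
    |Real.log (a / c)| ≤ |Real.log a| + |Real.log c| := by
  rcases eq_or_ne a 0 with h | h
  · simp only [h, zero_div, Real.log_zero, abs_zero]
    positivity
  rcases eq_or_ne c 0 with h' | h'
  · simp only [h', div_zero, Real.log_zero, abs_zero]
    positivity
  rw [Real.log_div h h']
  exact abs_sub _ _

lemma integrable_logPot_integrand (n : ℕ) (hn : 2 ≤ n) (f : Eucl n → ℝ)
    (hfc : Continuous f) (hint : Integrable f) (z : Eucl n) :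
    Integrable (fun y : Eucl n => Real.log (‖y‖ / ‖z - y‖) * f y) := by
  set ρ : ℝ := 2*‖z‖+2 with hρ
  have hρpos : (0:ℝ) < ρ := by positivity
  obtain ⟨y₀, hy₀, hS⟩ := (isCompact_closedBall (0:Eucl n) ρ).exists_isMaxOn
    ⟨0, mem_closedBall_self hρpos.le⟩ (hfc.norm.continuousOn)
  set S : ℝ := ‖f y₀‖ with hSS
  have hS0 : 0 ≤ S := norm_nonneg _
  have h1 : IntegrableOn (fun y : Eucl n => |Real.log ‖y‖|) (closedBall (0:Eucl n) ρ) volume := by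
    have := integrableOn_abslog n hn 0 ρ
    simpa using this
  have h2 : IntegrableOn (fun y : Eucl n => |Real.log ‖y - z‖|) (closedBall (0:Eucl n) ρ) volume :=
    integrableOn_abslog n hn z ρ
  have hsum : IntegrableOn (fun y : Eucl n => S * (|Real.log ‖y‖| + |Real.log ‖y - z‖|))
      (closedBall (0:Eucl n) ρ) volume := (h1.add h2).const_mul S
  have hind : Integrable ((closedBall (0:Eucl n) ρ).indicator
      (fun y : Eucl n => S * (|Real.log ‖y‖| + |Real.log ‖y - z‖|))) volume :=
    hsum.integrable_indicator measurableSet_closedBall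
  have hg : Integrable (fun y : Eucl n => (closedBall (0:Eucl n) ρ).indicator
      (fun y : Eucl n => S * (|Real.log ‖y‖| + |Real.log ‖y - z‖|)) y + ‖f y‖) volume :=
    hind.add hint.norm
  refine Integrable.mono' hg ?_ (ae_of_all _ ?_)
  · exact ((Real.measurable_log.comp (measurable_norm.div
      (measurable_norm.comp (measurable_const.sub measurable_id)))).mul
      hfc.measurable).aestronglyMeasurable
  · intro y
    rw [norm_mul, Real.norm_eq_abs, Real.norm_eq_abs]
    have hindnn : 0 ≤ (closedBall (0:Eucl n) ρ).indicator
        (fun y : Eucl n => S * (|Real.log ‖y‖| + |Real.log ‖y - z‖|)) y := by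
      refine indicator_nonneg ?_ y
      intro y _
      positivity
    by_cases hy : ‖y‖ ≤ ρ
    · have hmem : y ∈ closedBall (0:Eucl n) ρ := mem_closedBall_zero_iff.2 hy
      rw [indicator_of_mem hmem]
      have hl : |Real.log (‖y‖ / ‖z - y‖)| ≤ |Real.log ‖y‖| + |Real.log ‖y - z‖| := by
        have h := abs_log_ratio_le_add (a := ‖y‖) (c := ‖z - y‖)
        refine h.trans_eq ?_
        rw [norm_sub_rev z y]
      calc |Real.log (‖y‖ / ‖z - y‖)| * |f y|
          ≤ (|Real.log ‖y‖| + |Real.log ‖y - z‖|) * S := by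
            refine mul_le_mul hl ?_ (abs_nonneg _) (by positivity)
            have := hS hmem
            simpa [hSS] using this
        _ = S * (|Real.log ‖y‖| + |Real.log ‖y - z‖|) := by ring
        _ ≤ _ := le_add_of_nonneg_right (abs_nonneg _)
    · push_neg at hy
      have ha : (0:ℝ) < ‖y‖ := lt_trans hρpos hy
      have hzy : ‖z‖ ≤ ‖y‖/2 := by
        rw [hρ] at hy; linarith
      have hc1 : ‖y‖/2 ≤ ‖z - y‖ := by
        have := norm_sub_norm_le y z
        have h' : ‖y‖ - ‖z‖ ≤ ‖y - z‖ := by linarith [norm_sub_norm_le y z]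
        rw [norm_sub_rev y z] at h'
        linarith
      have hc2 : ‖z - y‖ ≤ 2*‖y‖ := by
        have := norm_sub_le z y
        linarith
      have := abs_log_div_le ha hc1 hc2
      calc |Real.log (‖y‖ / ‖z - y‖)| * |f y| ≤ 1 * |f y| :=
            mul_le_mul_of_nonneg_right this (abs_nonneg _)
        _ = |f y| := one_mul _
        _ ≤ _ := le_add_of_nonneg_left hindnn

lemma sphereVol_pos (n : ℕ) : 0 < sphereVol n := by
  unfold sphereVol
  have h1 : 0 < Real.pi ^ (((n:ℝ)+1)/2) := Real.rpow_pos_of_pos Real.pi_pos _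
  have h2 : 0 < Real.Gamma (((n:ℝ)+1)/2) := Real.Gamma_pos_of_pos (by positivity)
  positivity

lemma ennnorm_abs (r : ℝ) : (‖r‖₊ : ℝ≥0∞) = ENNReal.ofReal |r| := by
  rw [← Real.norm_eq_abs, ofReal_norm]; rfl

lemma iUnion_ball_nat_univ (n : ℕ) : (⋃ i : ℕ, ball (0:Eucl n) (i:ℝ)) = univ := by
  ext x
  simp only [mem_iUnion, mem_univ, iff_true, mem_ball_zero_iff]
  obtain ⟨i, hi⟩ := exists_nat_gt ‖x‖
  exact ⟨i, hi⟩

lemma tail_small (n : ℕ) (f : Eucl n → ℝ) (hint : Integrable f)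
    (δ' : ℝ) (hδ' : 0 < δ') :
    ∃ M : ℝ, 1 ≤ M ∧ (∫ y in (ball (0:Eucl n) M)ᶜ, ‖f y‖) ≤ δ' := by
  have hmono : Monotone (fun i : ℕ => ball (0:Eucl n) (i:ℝ)) := by
    intro i j hij
    exact ball_subset_ball (by exact_mod_cast hij)
  have hten := tendsto_setIntegral_of_monotone (fun i : ℕ => measurableSet_ball) hmono
    (hint.norm.integrableOn (s := ⋃ i : ℕ, ball (0:Eucl n) (i:ℝ)))
  rw [iUnion_ball_nat_univ n, setIntegral_univ] at hten
  have hdiff : Tendsto (fun i : ℕ => (∫ y, ‖f y‖) - ∫ y in ball (0:Eucl n) (i:ℝ), ‖f y‖)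
      atTop (nhds 0) := by
    have := hten.const_sub (∫ y, ‖f y‖)
    simpa using this
  have hev := (hdiff.eventually (eventually_lt_nhds hδ'))
  obtain ⟨i₀, hi₀⟩ := hev.exists
  refine ⟨max 1 (i₀:ℝ), le_max_left _ _, ?_⟩
  have hcompl : (∫ y in (ball (0:Eucl n) (i₀:ℝ))ᶜ, ‖f y‖)
      = (∫ y, ‖f y‖) - ∫ y in ball (0:Eucl n) (i₀:ℝ), ‖f y‖ := by
    have := integral_add_compl (measurableSet_ball (x := (0:Eucl n)) (ε := (i₀:ℝ))) hint.norm
    linarith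
  have hsub : (∫ y in (ball (0:Eucl n) (max 1 (i₀:ℝ)))ᶜ, ‖f y‖)
      ≤ ∫ y in (ball (0:Eucl n) (i₀:ℝ))ᶜ, ‖f y‖ := by
    refine setIntegral_mono_set (hint.norm.integrableOn) (ae_of_all _ fun y => norm_nonneg _) ?_
    refine HasSubset.Subset.eventuallyLE ?_
    exact compl_subset_compl.2 (ball_subset_ball (le_max_right _ _))
  calc (∫ y in (ball (0:Eucl n) (max 1 (i₀:ℝ)))ᶜ, ‖f y‖)
      ≤ ∫ y in (ball (0:Eucl n) (i₀:ℝ))ᶜ, ‖f y‖ := hsub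
    _ ≤ δ' := by rw [hcompl]; linarith [hi₀]
lemma abs_le_max_add (t : ℝ) : |t| ≤ max 0 t + max 0 (-t) := by
  rcases le_total t 0 with h | h
  · rw [abs_of_nonpos h]
    have h1 : (0:ℝ) ≤ max 0 t := le_max_left _ _
    have h2 : -t ≤ max 0 (-t) := le_max_right _ _
    linarith
  · rw [abs_of_nonneg h]
    have h1 : t ≤ max 0 t := le_max_right _ _
    have h2 : (0:ℝ) ≤ max 0 (-t) := le_max_left _ _
    linarith

lemma log_four_le_two : Real.log 4 ≤ 2 := by
  have h4 : (4:ℝ) = 2^2 := by norm_num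
  rw [h4, Real.log_pow]
  push_cast
  linarith [log_two_le_one]

lemma log_six_le_two : Real.log 6 ≤ 2 := by
  have he : (2.7182818283 : ℝ) < Real.exp 1 := Real.exp_one_gt_d9
  have h6 : (6:ℝ) ≤ Real.exp 2 := by
    have : Real.exp 2 = Real.exp 1 * Real.exp 1 := by
      rw [← Real.exp_add]; norm_num
    nlinarith
  calc Real.log 6 ≤ Real.log (Real.exp 2) := Real.log_le_log (by norm_num) h6
    _ = 2 := Real.log_exp 2

set_option maxHeartbeats 1000000 in
lemma main_est (n : ℕ) (hn : 2 ≤ n) (f : Eucl n → ℝ) (hfc : Continuous f)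
    (hint : Integrable f) (r₀ : ℝ) (hr₀ : 0 < r₀) (δ : ℝ) (hδ : 0 < δ) :
    ∃ R : ℝ, 3 ≤ R ∧ ∀ x : Eucl n, R ≤ ‖x‖ →
      |(1 / (volume (ball x r₀)).toReal) * (∫ y in ball x r₀, logPot n f y)
        + ((2 / (((n-1).factorial : ℝ) * sphereVol n)) * ∫ y, f y) * Real.log ‖x‖|
      ≤ δ * Real.log ‖x‖ := by
  haveI : Nonempty (Fin n) := ⟨⟨0, by omega⟩⟩
  haveI : Nontrivial (Eucl n) := inferInstance
  set C : ℝ := 2 / (((n-1).factorial : ℝ) * sphereVol n) with hC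
  have hfact : (0:ℝ) < ((n-1).factorial : ℝ) := by
    exact_mod_cast Nat.factorial_pos _
  have hCpos : 0 < C := by
    rw [hC]
    have := sphereVol_pos n
    positivity
  set c0 : ℝ := ∫ y, f y with hc0
  set V : ℝ≥0∞ := volume (ball (0:Eucl n) r₀) with hV
  have hV0 : V ≠ 0 := (measure_ball_pos volume 0 hr₀).ne'
  have hVtop : V ≠ ⊤ := measure_ball_lt_top.ne
  set Vr : ℝ := V.toReal with hVr
  have hVrpos : 0 < Vr := ENNReal.toReal_pos hV0 hVtop
  set κ : ℝ≥0∞ := ∫⁻ w in ball (0:Eucl n) 1, ENNReal.ofReal (-Real.log ‖w‖) with hκ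
  have hκtop : κ ≠ ⊤ := (kappa_lt_top n hn).ne
  set κr : ℝ := κ.toReal with hκr
  have hκr0 : 0 ≤ κr := ENNReal.toReal_nonneg
  have hκeq : ENNReal.ofReal κr = κ := ENNReal.ofReal_toReal hκtop
  have hVeq : ENNReal.ofReal Vr = V := ENNReal.ofReal_toReal hVtop
  set K₀ : ℝ := 7*Vr + κr with hK₀
  have hK₀pos : 0 < K₀ := by positivity
  -- choose M
  obtain ⟨M, hM1, hMtail⟩ := tail_small n f hint ((δ/2) / (C*K₀/Vr + 1))
    (by positivity)
  set A : Set (Eucl n) := ball (0:Eucl n) M with hA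
  set E1 : ℝ≥0∞ := ∫⁻ y in A, (‖f y‖₊ : ℝ≥0∞) * ENNReal.ofReal (|Real.log ‖y‖| + 1) with hE1
  set E2 : ℝ≥0∞ := ∫⁻ y in Aᶜ, (‖f y‖₊ : ℝ≥0∞) with hE2
  -- E1 finite
  have hMpos : (0:ℝ) < M := by linarith
  obtain ⟨y₁, hy₁, hS1⟩ := (isCompact_closedBall (0:Eucl n) M).exists_isMaxOn
    ⟨0, mem_closedBall_self hMpos.le⟩ (hfc.norm.continuousOn)
  have hE1top : E1 ≠ ⊤ := by
    have hb : ∀ y ∈ closedBall (0:Eucl n) M,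
        (‖f y‖₊ : ℝ≥0∞) * ENNReal.ofReal (|Real.log ‖y‖| + 1)
          ≤ ENNReal.ofReal ‖f y₁‖ * (ENNReal.ofReal |Real.log ‖y‖| + 1) := by
      intro y hy
      have h1 : (‖f y‖₊ : ℝ≥0∞) ≤ ENNReal.ofReal ‖f y₁‖ := by
        rw [ennnorm_abs, ← Real.norm_eq_abs]
        exact ENNReal.ofReal_le_ofReal (hS1 hy)
      have h2 : ENNReal.ofReal (|Real.log ‖y‖| + 1)
          = ENNReal.ofReal |Real.log ‖y‖| + 1 := by
        rw [ENNReal.ofReal_add (abs_nonneg _) zero_le_one, ENNReal.ofReal_one]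
      rw [h2]
      exact mul_le_mul h1 le_rfl (zero_le) (zero_le)
    have hmlog : Measurable (fun y : Eucl n => ENNReal.ofReal |Real.log ‖y‖| + 1) := by
      exact ((Real.measurable_log.comp measurable_norm).abs.ennreal_ofReal.add measurable_const)
    have hmeas : Measurable (fun y : Eucl n => ENNReal.ofReal ‖f y₁‖
        * (ENNReal.ofReal |Real.log ‖y‖| + 1)) := measurable_const.mul hmlog
    have hchain : E1 ≤ ∫⁻ y in closedBall (0:Eucl n) M,
        ENNReal.ofReal ‖f y₁‖ * (ENNReal.ofReal |Real.log ‖y‖| + 1) := by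
      refine le_trans (lintegral_mono_set ball_subset_closedBall) ?_
      exact setLIntegral_mono hmeas hb
    refine ne_top_of_le_ne_top ?_ hchain
    rw [lintegral_const_mul _ hmlog]
    refine ENNReal.mul_ne_top ENNReal.ofReal_ne_top ?_
    rw [lintegral_add_right _ measurable_const, setLIntegral_const]
    refine ENNReal.add_ne_top.2 ⟨?_, ?_⟩
    · have := lint_abslog_lt_top n hn 0 M
      simp only [sub_zero] at this
      exact this.ne
    · exact ENNReal.mul_ne_top (by simp) measure_closedBall_lt_top.ne
  have hE2top : E2 ≠ ⊤ := by
    refine ne_top_of_le_ne_top ?_ (setLIntegral_le_lintegral _ _)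
    exact hint.hasFiniteIntegral.ne
  set P : ℝ := E1.toReal with hP
  have hP0 : 0 ≤ P := ENNReal.toReal_nonneg
  set T : ℝ := E2.toReal with hT
  have hT0 : 0 ≤ T := ENNReal.toReal_nonneg
  have hTbound : T ≤ (δ/2) / (C*K₀/Vr + 1) := by
    have heq : ENNReal.ofReal (∫ y in Aᶜ, ‖f y‖) = E2 := by
      rw [hE2]
      exact ofReal_integral_norm_eq_lintegral_enorm hint.integrableOn
    have : T = ∫ y in Aᶜ, ‖f y‖ := by
      rw [hT, ← heq, ENNReal.toReal_ofReal]
      exact integral_nonneg fun y => norm_nonneg _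
    rw [this]
    exact hMtail
  -- choose R
  set R : ℝ := max 3 (max (2*(r₀+M)) (Real.exp (2*C*P/δ))) with hR
  refine ⟨R, le_max_left _ _, ?_⟩
  intro x hx
  have hx3 : 3 ≤ ‖x‖ := le_trans (le_max_left _ _) hx
  have hxM : 2*(r₀+M) ≤ ‖x‖ := le_trans (le_trans (le_max_left _ _) (le_max_right _ _)) hx
  have hxpos : (0:ℝ) < ‖x‖ := by linarith
  have hxexp : Real.exp (2*C*P/δ) ≤ ‖x‖ :=
    le_trans (le_trans (le_max_right _ _) (le_max_right _ _)) hx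
  set L : ℝ := Real.log ‖x‖ with hL
  have hxP : 2*C*P/δ ≤ L := by
    rw [hL, ← Real.log_exp (2*C*P/δ)]
    exact Real.log_le_log (Real.exp_pos _) hxexp
  have hL1 : 1 ≤ L := by
    rw [hL, ← Real.log_exp 1]
    refine Real.log_le_log (Real.exp_pos _) ?_
    have := Real.exp_one_lt_d9
    linarith
  have hr₀x : 2*r₀ ≤ ‖x‖ := by linarith
  set B : Set (Eucl n) := ball x r₀ with hB
  have hVB : volume B = V := by rw [hB, hV]; exact Measure.addHaar_ball_center volume x r₀
  -- g and measurability
  set g : Eucl n → Eucl n → ℝ :=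
    fun z y => (L + Real.log ‖y‖ - Real.log ‖z - y‖) * f y with hgdef
  have hgm : Measurable (fun p : Eucl n × Eucl n => g p.1 p.2) := by
    refine Measurable.mul ?_ (hfc.measurable.comp measurable_snd)
    refine Measurable.sub ?_ ?_
    · exact measurable_const.add (Real.measurable_log.comp (measurable_norm.comp measurable_snd))
    · exact Real.measurable_log.comp (measurable_norm.comp (measurable_fst.sub measurable_snd))
  -- per-z integrability and identity
  have hIz : ∀ z : Eucl n, Integrable (fun y => Real.log (‖y‖ / ‖z - y‖) * f y) :=
    integrable_logPot_integrand n hn f hfc hint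
  have hgz : ∀ z : Eucl n, Integrable (g z) ∧
      (∫ y, g z y) = (∫ y, Real.log (‖y‖ / ‖z - y‖) * f y) + c0 * L := by
    intro z
    have hmeas0 : volume ({(0:Eucl n), z} : Set (Eucl n)) = 0 :=
      ((Set.finite_singleton z).insert 0).measure_zero volume
    have hae : ∀ᵐ y : Eucl n, Real.log (‖y‖ / ‖z - y‖) * f y + L * f y = g z y := by
      rw [ae_iff]
      refine measure_mono_null ?_ hmeas0
      intro y hy
      simp only [mem_setOf_eq] at hy
      by_contra hmem
      simp only [mem_insert_iff, mem_singleton_iff, not_or] at hmem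
      obtain ⟨hy0, hyz⟩ := hmem
      apply hy
      have h1 : ‖y‖ ≠ 0 := norm_ne_zero_iff.2 hy0
      have h2 : ‖z - y‖ ≠ 0 := norm_ne_zero_iff.2 (sub_ne_zero.2 (Ne.symm hyz))
      rw [hgdef]
      simp only
      rw [Real.log_div h1 h2]
      ring
    have hadd : Integrable (fun y => Real.log (‖y‖ / ‖z - y‖) * f y + L * f y) :=
      (hIz z).add (hint.const_mul L)
    refine ⟨hadd.congr hae, ?_⟩
    rw [← integral_congr_ae hae, integral_add (hIz z) (hint.const_mul L), integral_const_mul]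
    rw [hc0]; ring
  -- inner bound
  have hinner : ∀ y : Eucl n, (∫⁻ z in B, (‖g z y‖₊ : ℝ≥0∞))
      ≤ (if ‖y‖ < M then ENNReal.ofReal (|Real.log ‖y‖| + 1) * V
          else ENNReal.ofReal (K₀ * L)) * (‖f y‖₊ : ℝ≥0∞) := by
    intro y
    have hmeasG : Measurable fun z : Eucl n =>
        (‖(L + Real.log ‖y‖ - Real.log ‖z - y‖ : ℝ)‖₊ : ℝ≥0∞) := by
      refine Measurable.enorm (f := fun z : Eucl n => (L + Real.log ‖y‖ - Real.log ‖z - y‖ : ℝ)) ?_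
      exact (measurable_const.sub
        (Real.measurable_log.comp (measurable_norm.comp (measurable_id.sub_const y))))
    have hsplit : (∫⁻ z in B, (‖g z y‖₊ : ℝ≥0∞))
        = (∫⁻ z in B, (‖(L + Real.log ‖y‖ - Real.log ‖z - y‖ : ℝ)‖₊ : ℝ≥0∞)) * ‖f y‖₊ := by
      rw [← lintegral_mul_const _ hmeasG]
      refine lintegral_congr fun z => ?_
      rw [hgdef]
      simp only [nnnorm_mul, ENNReal.coe_mul]
    rw [hsplit]
    refine mul_le_mul ?_ le_rfl (zero_le) (zero_le)
    by_cases hyM : ‖y‖ < M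
    · rw [if_pos hyM]
      have hptw : ∀ z ∈ B, (‖(L + Real.log ‖y‖ - Real.log ‖z - y‖ : ℝ)‖₊ : ℝ≥0∞)
          ≤ ENNReal.ofReal (|Real.log ‖y‖| + 1) := by
        intro z hz
        rw [hB, mem_ball, dist_eq_norm] at hz
        have h1 : ‖x‖ - ‖y‖ ≤ ‖x - y‖ := norm_sub_norm_le x y
        have h2 : ‖x - y‖ ≤ ‖x - z‖ + ‖z - y‖ := by
          calc ‖x - y‖ = ‖(x - z) + (z - y)‖ := by abel_nf
            _ ≤ ‖x - z‖ + ‖z - y‖ := norm_add_le _ _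
        have h3 : ‖x - z‖ = ‖z - x‖ := norm_sub_rev x z
        have hlow : ‖x‖/2 ≤ ‖z - y‖ := by
          rw [h3] at h2
          linarith
        have hup : ‖z - y‖ ≤ 2*‖x‖ := by
          have h4 : ‖z - y‖ ≤ ‖z - x‖ + ‖x - y‖ := by
            calc ‖z - y‖ = ‖(z - x) + (x - y)‖ := by abel_nf
              _ ≤ ‖z - x‖ + ‖x - y‖ := norm_add_le _ _
          have h5 : ‖x - y‖ ≤ ‖x‖ + ‖y‖ := norm_sub_le _ _
          linarith
        have hz0 : 0 < ‖z - y‖ := by linarith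
        have habs : |L - Real.log ‖z - y‖| ≤ 1 := by
          have hd := abs_log_div_le hxpos hlow hup
          rwa [Real.log_div (ne_of_gt hxpos) (ne_of_gt hz0)] at hd
        rw [ennnorm_abs]
        refine ENNReal.ofReal_le_ofReal ?_
        have htri : |L + Real.log ‖y‖ - Real.log ‖z - y‖|
            ≤ |Real.log ‖y‖| + |L - Real.log ‖z - y‖| := by
          have : L + Real.log ‖y‖ - Real.log ‖z - y‖
              = Real.log ‖y‖ + (L - Real.log ‖z - y‖) := by ring
          rw [this]
          exact abs_add_le _ _
        linarith
      calc (∫⁻ z in B, (‖(L + Real.log ‖y‖ - Real.log ‖z - y‖ : ℝ)‖₊ : ℝ≥0∞))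
          ≤ ∫⁻ _ in B, ENNReal.ofReal (|Real.log ‖y‖| + 1) :=
            setLIntegral_mono measurable_const hptw
        _ = ENNReal.ofReal (|Real.log ‖y‖| + 1) * V := by rw [setLIntegral_const, hVB]
    · rw [if_neg hyM]
      push_neg at hyM
      have hy1 : (1:ℝ) ≤ ‖y‖ := le_trans hM1 hyM
      by_cases hy4 : 4*‖x‖ < ‖y‖
      · -- far case
        have hptw : ∀ z ∈ B, (‖(L + Real.log ‖y‖ - Real.log ‖z - y‖ : ℝ)‖₊ : ℝ≥0∞)
            ≤ ENNReal.ofReal (2*L) := by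
          intro z hz
          rw [hB, mem_ball, dist_eq_norm] at hz
          have hzn : ‖z‖ ≤ (3/2)*‖x‖ := by
            have := norm_sub_norm_le z x
            linarith
          have hlow : ‖y‖/2 ≤ ‖z - y‖ := by
            have h1 : ‖y‖ - ‖z‖ ≤ ‖y - z‖ := norm_sub_norm_le y z
            rw [norm_sub_rev y z] at h1
            linarith
          have hup : ‖z - y‖ ≤ 2*‖y‖ := by
            have := norm_sub_le z y
            linarith
          have hy0 : (0:ℝ) < ‖y‖ := by linarith
          have hz0 : (0:ℝ) < ‖z - y‖ := by linarith
          have habs : |Real.log ‖y‖ - Real.log ‖z - y‖| ≤ 1 := by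
            have hd := abs_log_div_le hy0 hlow hup
            rwa [Real.log_div (ne_of_gt hy0) (ne_of_gt hz0)] at hd
          rw [ennnorm_abs]
          refine ENNReal.ofReal_le_ofReal ?_
          have htri : |L + Real.log ‖y‖ - Real.log ‖z - y‖|
              ≤ |L| + |Real.log ‖y‖ - Real.log ‖z - y‖| := by
            have : L + Real.log ‖y‖ - Real.log ‖z - y‖
                = L + (Real.log ‖y‖ - Real.log ‖z - y‖) := by ring
            rw [this]
            exact abs_add_le _ _
          rw [abs_of_nonneg (by linarith : (0:ℝ) ≤ L)] at htri
          linarith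
        calc (∫⁻ z in B, (‖(L + Real.log ‖y‖ - Real.log ‖z - y‖ : ℝ)‖₊ : ℝ≥0∞))
            ≤ ∫⁻ _ in B, ENNReal.ofReal (2*L) := setLIntegral_mono measurable_const hptw
          _ = ENNReal.ofReal (2*L) * V := by rw [setLIntegral_const, hVB]
          _ ≤ ENNReal.ofReal (K₀ * L) := by
              rw [← hVeq, ← ENNReal.ofReal_mul (by linarith : (0:ℝ) ≤ 2*L)]
              refine ENNReal.ofReal_le_ofReal ?_
              rw [hK₀]
              nlinarith
      · -- middle case
        push_neg at hy4
        have hptw : ∀ z ∈ B, (‖(L + Real.log ‖y‖ - Real.log ‖z - y‖ : ℝ)‖₊ : ℝ≥0∞)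
            ≤ ENNReal.ofReal (7*L) + ENNReal.ofReal (-Real.log ‖z - y‖) := by
          intro z hz
          rw [hB, mem_ball, dist_eq_norm] at hz
          have hly : |Real.log ‖y‖| ≤ 3*L := by
            rw [abs_of_nonneg (Real.log_nonneg hy1)]
            have h1 : Real.log ‖y‖ ≤ Real.log (4*‖x‖) :=
              Real.log_le_log (by linarith) hy4
            rw [Real.log_mul (by norm_num) (ne_of_gt hxpos)] at h1
            linarith [log_four_le_two]
          have hlzy : max 0 (Real.log ‖z - y‖) ≤ 3*L := by
            rcases le_total ‖z - y‖ 1 with h | h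
            · have : Real.log ‖z - y‖ ≤ 0 := Real.log_nonpos (norm_nonneg _) h
              rw [max_eq_left this]
              linarith
            · have hub : ‖z - y‖ ≤ 6*‖x‖ := by
                have h4 : ‖z - y‖ ≤ ‖z - x‖ + ‖x - y‖ := by
                  calc ‖z - y‖ = ‖(z - x) + (x - y)‖ := by abel_nf
                    _ ≤ ‖z - x‖ + ‖x - y‖ := norm_add_le _ _
                have h5 : ‖x - y‖ ≤ ‖x‖ + ‖y‖ := norm_sub_le _ _
                linarith
              have h1 : Real.log ‖z - y‖ ≤ Real.log (6*‖x‖) :=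
                Real.log_le_log (by linarith) hub
              rw [Real.log_mul (by norm_num) (ne_of_gt hxpos)] at h1
              have : Real.log ‖z - y‖ ≤ 3*L := by linarith [log_six_le_two]
              rw [max_le_iff]
              exact ⟨by linarith, this⟩
          have hG : |L + Real.log ‖y‖ - Real.log ‖z - y‖|
              ≤ 7*L + max 0 (-Real.log ‖z - y‖) := by
            have htri : |L + Real.log ‖y‖ - Real.log ‖z - y‖|
                ≤ |L| + |Real.log ‖y‖| + |Real.log ‖z - y‖| := by
              calc |L + Real.log ‖y‖ - Real.log ‖z - y‖|
                  ≤ |L + Real.log ‖y‖| + |Real.log ‖z - y‖| := abs_sub _ _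
                _ ≤ |L| + |Real.log ‖y‖| + |Real.log ‖z - y‖| := by
                    linarith [abs_add_le L (Real.log ‖y‖)]
            have habs0 : |L| = L := abs_of_nonneg (by linarith)
            have hmx := abs_le_max_add (Real.log ‖z - y‖)
            linarith
          rw [ennnorm_abs]
          calc ENNReal.ofReal |L + Real.log ‖y‖ - Real.log ‖z - y‖|
              ≤ ENNReal.ofReal (7*L + max 0 (-Real.log ‖z - y‖)) :=
                ENNReal.ofReal_le_ofReal hG
            _ = ENNReal.ofReal (7*L) + ENNReal.ofReal (max 0 (-Real.log ‖z - y‖)) :=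
                ENNReal.ofReal_add (by linarith) (le_max_left _ _)
            _ = ENNReal.ofReal (7*L) + ENNReal.ofReal (-Real.log ‖z - y‖) := by
                rw [ofReal_max0]
        have hmeas2 : Measurable fun z : Eucl n =>
            ENNReal.ofReal (7*L) + ENNReal.ofReal (-Real.log ‖z - y‖) := by
          refine Measurable.add (f := fun _ => ENNReal.ofReal (7*L)) (g := fun z => ENNReal.ofReal (-Real.log ‖z - y‖)) measurable_const ?_
          exact (Real.measurable_log.comp (measurable_norm.comp
            (measurable_id.sub_const y))).neg.ennreal_ofReal
        calc (∫⁻ z in B, (‖(L + Real.log ‖y‖ - Real.log ‖z - y‖ : ℝ)‖₊ : ℝ≥0∞))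
            ≤ ∫⁻ z in B, (ENNReal.ofReal (7*L) + ENNReal.ofReal (-Real.log ‖z - y‖)) :=
              setLIntegral_mono hmeas2 hptw
          _ = ENNReal.ofReal (7*L) * V + ∫⁻ z in B, ENNReal.ofReal (-Real.log ‖z - y‖) := by
              rw [lintegral_add_left measurable_const, setLIntegral_const, hVB]
          _ ≤ ENNReal.ofReal (7*L) * V + κ := by
              refine add_le_add le_rfl ?_
              rw [hκ]
              exact lint_neglog_set_le n B y
          _ ≤ ENNReal.ofReal (K₀ * L) := by
              rw [← hVeq, ← hκeq, ← ENNReal.ofReal_mul (by linarith : (0:ℝ) ≤ 7*L),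
                ← ENNReal.ofReal_add (by nlinarith) hκr0]
              refine ENNReal.ofReal_le_ofReal ?_
              rw [hK₀]
              nlinarith
  -- assemble the double lintegral bound
  have hmeasΦ : Measurable (fun p : Eucl n × Eucl n => (‖g p.1 p.2‖₊ : ℝ≥0∞)) := hgm.enorm
  have hswap : (∫⁻ z in B, ∫⁻ y, (‖g z y‖₊ : ℝ≥0∞))
      = ∫⁻ y, ∫⁻ z in B, (‖g z y‖₊ : ℝ≥0∞) :=
    lintegral_lintegral_swap hmeasΦ.aemeasurable
  have htotal : (∫⁻ z in B, ∫⁻ y, (‖g z y‖₊ : ℝ≥0∞))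
      ≤ V * E1 + ENNReal.ofReal (K₀*L) * E2 := by
    rw [hswap]
    have hmlog2 : Measurable fun y : Eucl n => |Real.log ‖y‖| + 1 := by
      have hl : Measurable fun y : Eucl n => Real.log ‖y‖ :=
        Real.measurable_log.comp measurable_norm
      exact hl.abs.add measurable_const
    have hm2 : Measurable (fun y : Eucl n =>
        (‖f y‖₊ : ℝ≥0∞) * ENNReal.ofReal (|Real.log ‖y‖| + 1)) :=
      hfc.measurable.enorm.mul hmlog2.ennreal_ofReal
    rw [← lintegral_add_compl (fun y => ∫⁻ z in B, (‖g z y‖₊ : ℝ≥0∞))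
      (measurableSet_ball (x := (0:Eucl n)) (ε := M))]
    refine add_le_add ?_ ?_
    · -- on A
      have hbd : ∀ y ∈ A, (∫⁻ z in B, (‖g z y‖₊ : ℝ≥0∞))
          ≤ V * ((‖f y‖₊ : ℝ≥0∞) * ENNReal.ofReal (|Real.log ‖y‖| + 1)) := by
        intro y hy
        rw [hA, mem_ball_zero_iff] at hy
        have := hinner y
        rw [if_pos hy] at this
        refine this.trans ?_
        rw [show ENNReal.ofReal (|Real.log ‖y‖| + 1) * V * (‖f y‖₊ : ℝ≥0∞)
          = V * ((‖f y‖₊ : ℝ≥0∞) * ENNReal.ofReal (|Real.log ‖y‖| + 1)) by ring]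
      calc (∫⁻ y in A, ∫⁻ z in B, (‖g z y‖₊ : ℝ≥0∞))
          ≤ ∫⁻ y in A, V * ((‖f y‖₊ : ℝ≥0∞) * ENNReal.ofReal (|Real.log ‖y‖| + 1)) :=
            setLIntegral_mono (hm2.const_mul V) hbd
        _ = V * E1 := by
            rw [hE1, lintegral_const_mul _ hm2]
    · -- on Aᶜ
      have hbd : ∀ y ∈ Aᶜ, (∫⁻ z in B, (‖g z y‖₊ : ℝ≥0∞))
          ≤ ENNReal.ofReal (K₀*L) * (‖f y‖₊ : ℝ≥0∞) := by
        intro y hy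
        rw [hA, mem_compl_iff, mem_ball_zero_iff] at hy
        push_neg at hy
        have := hinner y
        rw [if_neg (not_lt.2 hy)] at this
        exact this
      calc (∫⁻ y in Aᶜ, ∫⁻ z in B, (‖g z y‖₊ : ℝ≥0∞))
          ≤ ∫⁻ y in Aᶜ, ENNReal.ofReal (K₀*L) * (‖f y‖₊ : ℝ≥0∞) :=
            setLIntegral_mono (measurable_const.mul hfc.measurable.enorm) hbd
        _ = ENNReal.ofReal (K₀*L) * E2 := by
            rw [hE2]; exact lintegral_const_mul _ hfc.measurable.enorm
  have hfin : V * E1 + ENNReal.ofReal (K₀*L) * E2 ≠ ⊤ := by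
    refine ENNReal.add_ne_top.2 ⟨?_, ?_⟩
    · exact ENNReal.mul_ne_top hVtop hE1top
    · exact ENNReal.mul_ne_top ENNReal.ofReal_ne_top hE2top
  -- the function J
  set J : Eucl n → ℝ := fun z => ∫ y, g z y with hJdef
  have hJmeas : AEStronglyMeasurable J (volume.restrict B) := by
    have : AEStronglyMeasurable (fun p : Eucl n × Eucl n => g p.1 p.2)
        ((volume.restrict B).prod volume) := hgm.aestronglyMeasurable
    exact this.integral_prod_right'
  have hJlint : (∫⁻ z in B, (‖J z‖₊ : ℝ≥0∞)) ≤ V * E1 + ENNReal.ofReal (K₀*L) * E2 := by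
    refine le_trans ?_ htotal
    refine lintegral_mono fun z => ?_
    exact enorm_integral_le_lintegral_enorm _
  have hJint : IntegrableOn J B := by
    refine ⟨hJmeas, ?_⟩
    show (∫⁻ z in B, (‖J z‖₊ : ℝ≥0∞)) < ⊤
    exact lt_of_le_of_lt hJlint (lt_top_iff_ne_top.2 hfin)
  have hJnorm : ‖∫ z in B, J z‖ ≤ (V * E1 + ENNReal.ofReal (K₀*L) * E2).toReal := by
    refine le_trans (norm_integral_le_lintegral_norm J) ?_
    refine ENNReal.toReal_mono hfin ?_
    refine le_trans (le_of_eq ?_) hJlint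
    refine lintegral_congr fun z => ?_
    rw [ennnorm_abs, Real.norm_eq_abs]
  -- identity for logPot
  have heq : ∀ z : Eucl n, logPot n f z = C * (J z - c0 * L) := by
    intro z
    have h2 := (hgz z).2
    have : J z = (∫ y, Real.log (‖y‖ / ‖z - y‖) * f y) + c0 * L := h2
    rw [logPot, ← hC]
    rw [this]
    ring
  have hintJ : (∫ z in B, logPot n f z) = C * (∫ z in B, J z) - C*c0*L*Vr := by
    have hconst : IntegrableOn (fun _ : Eucl n => c0 * L) B :=
      integrableOn_const (by rw [hVB]; exact hVtop)
    calc (∫ z in B, logPot n f z) = ∫ z in B, C * (J z - c0 * L) :=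
          integral_congr_ae (ae_of_all _ fun z => heq z)
      _ = C * ∫ z in B, (J z - c0 * L) := integral_const_mul _ _
      _ = C * ((∫ z in B, J z) - (∫ _ in B, c0 * L)) := by
          rw [integral_sub hJint hconst]
      _ = C * ((∫ z in B, J z) - Vr * (c0 * L)) := by
          rw [setIntegral_const, measureReal_def, hVB, smul_eq_mul, hVr]
      _ = C * (∫ z in B, J z) - C*c0*L*Vr := by ring
  -- final computation
  have hmain : (1 / (volume B).toReal) * (∫ y in B, logPot n f y)
      + C * c0 * L = (C/Vr) * ∫ z in B, J z := by
    have hvol : (volume B).toReal = Vr := by rw [hVB, ← hVr]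
    rw [hvol, hintJ]
    field_simp
    try ring
  rw [hmain]
  -- bound
  have htofin : (V * E1 + ENNReal.ofReal (K₀*L) * E2).toReal = Vr * P + K₀*L*T := by
    rw [ENNReal.toReal_add (ENNReal.mul_ne_top hVtop hE1top)
      (ENNReal.mul_ne_top ENNReal.ofReal_ne_top hE2top),
      ENNReal.toReal_mul, ENNReal.toReal_mul, ENNReal.toReal_ofReal (by positivity)]
  have habs : |(C/Vr) * ∫ z in B, J z| ≤ (C/Vr) * (Vr * P + K₀*L*T) := by
    rw [abs_mul, abs_of_pos (by positivity : (0:ℝ) < C/Vr)]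
    refine mul_le_mul_of_nonneg_left ?_ (by positivity)
    rw [← Real.norm_eq_abs, ← htofin]
    exact hJnorm
  refine le_trans habs ?_
  have hCP : C * P ≤ (δ/2) * L := by
    have h1 : 2*C*P ≤ δ * L := by
      rw [div_le_iff₀ hδ] at hxP
      linarith [mul_comm L δ]
    linarith
  have hq : (C*K₀/Vr) * T ≤ δ/2 := by
    set q : ℝ := C*K₀/Vr with hqdef
    have hqpos : 0 < q := by positivity
    have h1 : q * T ≤ q * ((δ/2) / (q + 1)) :=
      mul_le_mul_of_nonneg_left hTbound (le_of_lt hqpos)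
    have h2 : q * ((δ/2) / (q + 1)) ≤ δ/2 := by
      rw [mul_div_assoc'] at *
      rw [div_le_iff₀ (by linarith)]
      nlinarith
    linarith
  have hexpand : (C/Vr) * (Vr * P + K₀*L*T) = C*P + ((C*K₀/Vr) * T) * L := by
    field_simp
  rw [hexpand]
  have h2 : ((C*K₀/Vr) * T) * L ≤ (δ/2) * L :=
    mul_le_mul_of_nonneg_right hq (by linarith)
  linarith

/-- Lemma 2.4: averages of the logarithmic potential over unit-size balls. -/
theorem logPot_avg_fixed_radius (n : ℕ) (hn : 2 ≤ n) (f : Eucl n → ℝ)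
    (hf : ContDiff ℝ (⊤ : ℕ∞) f) (hint : Integrable f) (r₀ : ℝ) (hr₀ : 0 < r₀) :
    ∃ ε : Eucl n → ℝ, Tendsto ε (comap norm atTop) (nhds 0) ∧
      ∃ R₀ : ℝ, ∀ x : Eucl n, R₀ < ‖x‖ →
        (1 / (volume (Metric.ball x r₀)).toReal) * ∫ y in Metric.ball x r₀, logPot n f y
          = (-((2 / (((n-1).factorial : ℝ) * sphereVol n)) * ∫ y, f y) + ε x) * Real.log ‖x‖ := by
  classical
  set α : ℝ := (2 / (((n-1).factorial : ℝ) * sphereVol n)) * ∫ y, f y with hα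
  set Avg : Eucl n → ℝ := fun x =>
    (1 / (volume (Metric.ball x r₀)).toReal) * ∫ y in Metric.ball x r₀, logPot n f y with hAvg
  set ε : Eucl n → ℝ := fun x =>
    if 3 ≤ ‖x‖ then Avg x / Real.log ‖x‖ + α else 0 with hε
  have hlog3 : (0:ℝ) < Real.log 3 := Real.log_pos (by norm_num)
  refine ⟨ε, ?_, 3, ?_⟩
  · -- tendsto
    rw [Metric.tendsto_nhds]
    intro δ hδ
    obtain ⟨R, hR3, hRest⟩ := main_est n hn f hf.continuous hint r₀ hr₀ (δ/2) (by positivity)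
    have hmem : (norm : Eucl n → ℝ) ⁻¹' (Ici R) ∈ comap (norm : Eucl n → ℝ) atTop :=
      preimage_mem_comap (mem_atTop R)
    filter_upwards [hmem] with x hx
    have hxR : R ≤ ‖x‖ := hx
    have hx3 : 3 ≤ ‖x‖ := le_trans hR3 hxR
    have hL : (0:ℝ) < Real.log ‖x‖ :=
      lt_of_lt_of_le hlog3 (Real.log_le_log (by norm_num) hx3)
    have hb := hRest x hxR
    rw [Real.dist_eq, sub_zero, hε]
    simp only [if_pos hx3]
    have heq : Avg x / Real.log ‖x‖ + α = (Avg x + α * Real.log ‖x‖) / Real.log ‖x‖ := by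
      field_simp
    rw [heq, abs_div, abs_of_pos hL, div_lt_iff₀ hL]
    have : |Avg x + α * Real.log ‖x‖| ≤ δ/2 * Real.log ‖x‖ := hb
    nlinarith
  · intro x hx
    have hx3 : 3 ≤ ‖x‖ := le_of_lt hx
    have hL : (0:ℝ) < Real.log ‖x‖ :=
      lt_of_lt_of_le hlog3 (Real.log_le_log (by norm_num) hx3)
    have hεx : ε x = Avg x / Real.log ‖x‖ + α := by
      rw [hε]; simp only [if_pos hx3]
    show Avg x = (-α + ε x) * Real.log ‖x‖
    rw [hεx]
    field_simp
    ring


end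
end

section
/- Let H_m be a nonnegative homogeneous polynomial of degree m on ℝⁿ satisfying Δ^{⌊(n+1)/2⌋} H_m = 0. Then m ≤ n-1. -/
open MeasureTheory Filter Real Set Metric

noncomputable section

/-! The Gaussian integral `G(P) = ∫ P(y) e^{-|y|²} dy` diagonalises the Laplacian on homogeneous
polynomials: integrating the one-dimensional moments `∫ t^j e^{-t²} dt` by parts gives
`G(ΔP) = 2m · G(P)` for `P` homogeneous of degree `m`. A nonnegative `H ≠ 0` has even degree
`m = 2s` and `G(H) > 0`, so `G(Δ^s H) = 2^s m (m - 2) ⋯ 2 · G(H) ≠ 0`. Hence `Δ^k H = 0` forces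
`m < 2k`, and with `m` even and `k = ⌊(n+1)/2⌋` this is `m ≤ n - 1`. -/

namespace MvPolynomial

section Algebraic

variable {σ R : Type*} [CommSemiring R] {φ : MvPolynomial σ R} {m : ℕ}

theorem IsHomogeneous.eval_smul (hφ : φ.IsHomogeneous m) (c : R) (x : σ → R) :
    eval (c • x) φ = c ^ m * eval x φ := by
  conv_lhs => rw [← φ.support_sum_monomial_coeff]
  conv_rhs => rw [← φ.support_sum_monomial_coeff]
  simp only [map_sum, Finset.mul_sum, eval_monomial]
  refine Finset.sum_congr rfl fun d hd => ?_
  rw [Finsupp.prod, Finsupp.prod]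
  simp only [Pi.smul_apply, smul_eq_mul, mul_pow, Finset.prod_mul_distrib,
    Finset.prod_pow_eq_pow_sum]
  rw [← hφ.degree_eq_sum_deg_support hd]
  ring

variable [Fintype σ]

variable (σ R) in
def laplacian : MvPolynomial σ R →ₗ[R] MvPolynomial σ R :=
  ∑ i, (pderiv i).toLinearMap ∘ₗ (pderiv i).toLinearMap

theorem laplacian_apply (φ : MvPolynomial σ R) :
    laplacian σ R φ = ∑ i, pderiv i (pderiv i φ) := by
  simp [laplacian]

theorem IsHomogeneous.laplacian (hφ : φ.IsHomogeneous m) :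
    (MvPolynomial.laplacian σ R φ).IsHomogeneous (m - 2) := by
  rw [laplacian_apply]
  exact IsHomogeneous.sum _ _ _ fun i _ => by
    simpa [Nat.sub_sub] using hφ.pderiv.pderiv (i := i)

theorem IsHomogeneous.laplacian_iterate (hφ : φ.IsHomogeneous m) (j : ℕ) :
    ((MvPolynomial.laplacian σ R)^[j] φ).IsHomogeneous (m - 2 * j) := by
  induction j with
  | zero => simpa using hφ
  | succ j ih =>
    rw [Function.iterate_succ_apply']
    simpa [Nat.sub_sub, mul_add] using ih.laplacian

end Algebraic

theorem IsHomogeneous.even_of_nonneg {R : Type*} [Field R] [LinearOrder R] [IsStrictOrderedRing R]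
    {σ : Type*} {φ : MvPolynomial σ R} {m : ℕ} (hφ : φ.IsHomogeneous m) (hne : φ ≠ 0)
    (hpos : ∀ x, 0 ≤ eval x φ) : Even m := by
  by_contra hodd
  refine hne (MvPolynomial.funext fun x => le_antisymm ?_ (by simpa using hpos x))
  have hneg := hφ.eval_smul (-1) x
  rw [(Nat.not_even_iff_odd.mp hodd).neg_one_pow, neg_one_smul] at hneg
  simpa [hneg] using hpos (-x)

end MvPolynomial

def gaussianMoment (j : ℕ) : ℝ := ∫ t : ℝ, t ^ j * exp (-t ^ 2)

theorem integrable_pow_mul_exp_neg_sq (j : ℕ) :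
    Integrable fun t : ℝ => t ^ j * exp (-t ^ 2) := by
  simpa [Real.rpow_natCast] using
    integrable_rpow_mul_exp_neg_mul_sq (b := 1) one_pos (s := j)
      (by linarith [j.cast_nonneg (α := ℝ)])

theorem gaussianMoment_of_odd {j : ℕ} (hj : Odd j) : gaussianMoment j = 0 := by
  have h := integral_neg_eq_self (fun t : ℝ => t ^ j * exp (-t ^ 2)) volume
  simp only [hj.neg_pow, neg_sq, neg_mul, integral_neg] at h
  rw [gaussianMoment]
  linarith

theorem two_mul_gaussianMoment_add_two (j : ℕ) :
    2 * gaussianMoment (j + 2) = (j + 1) * gaussianMoment j := by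
  have hderiv : ∀ t : ℝ, HasDerivAt (fun t : ℝ => t ^ (j + 1) * exp (-t ^ 2))
      ((j + 1) * (t ^ j * exp (-t ^ 2)) - 2 * (t ^ (j + 2) * exp (-t ^ 2))) t := fun t => by
    refine ((hasDerivAt_pow (j + 1) t).fun_mul ((hasDerivAt_pow 2 t).fun_neg.exp)).congr_deriv ?_
    simp only [Nat.add_sub_cancel, Nat.cast_add, Nat.cast_one, Nat.cast_ofNat]
    ring
  have hint := ((integrable_pow_mul_exp_neg_sq j).const_mul (j + 1)).sub
    ((integrable_pow_mul_exp_neg_sq (j + 2)).const_mul 2)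
  have h := integral_eq_zero_of_hasDerivAt_of_integrable hderiv hint
    (integrable_pow_mul_exp_neg_sq (j + 1))
  rw [integral_sub ((integrable_pow_mul_exp_neg_sq j).const_mul _)
    ((integrable_pow_mul_exp_neg_sq (j + 2)).const_mul _), integral_const_mul,
    integral_const_mul] at h
  simp only [gaussianMoment]
  linarith

theorem mul_mul_gaussianMoment_sub_two (a : ℕ) :
    a * ((a - 1 : ℕ) : ℝ) * gaussianMoment (a - 2) = 2 * a * gaussianMoment a := by
  match a with
  | 0 => simp
  | 1 => simp [gaussianMoment_of_odd odd_one]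
  | a + 2 =>
    simp only [Nat.add_sub_cancel, Nat.add_one_sub_one]
    push_cast
    linear_combination ((a : ℝ) + 2) * (two_mul_gaussianMoment_add_two a).symm

namespace MvPolynomial

section GaussianIntegral

variable {σ : Type*} [Fintype σ] {φ : MvPolynomial σ ℝ} {m : ℕ}

theorem eval_monomial_mul_gaussian (d : σ →₀ ℕ) (c : ℝ) (y : σ → ℝ) :
    eval y (monomial d c) * ∏ i, exp (-y i ^ 2) = c * ∏ i, (y i ^ d i * exp (-y i ^ 2)) := by
  rw [eval_monomial, Finsupp.prod_fintype _ _ fun i => pow_zero _, Finset.prod_mul_distrib]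
  ring

theorem integrable_eval_mul_gaussian (φ : MvPolynomial σ ℝ) :
    Integrable fun y : σ → ℝ => eval y φ * ∏ i, exp (-y i ^ 2) := by
  induction φ using induction_on' with
  | monomial d c =>
    simp_rw [eval_monomial_mul_gaussian]
    exact (Integrable.fintype_prod (f := fun i (t : ℝ) => t ^ d i * exp (-t ^ 2))
      fun i => integrable_pow_mul_exp_neg_sq (d i)).const_mul c
  | add p q hp hq => simpa only [map_add, add_mul] using hp.fun_add hq

def gaussianIntegral : MvPolynomial σ ℝ →ₗ[ℝ] ℝ where
  toFun φ := ∫ y : σ → ℝ, eval y φ * ∏ i, exp (-y i ^ 2)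
  map_add' p q := by
    simp only [map_add, add_mul]
    exact integral_add (integrable_eval_mul_gaussian p) (integrable_eval_mul_gaussian q)
  map_smul' c p := by
    simp only [smul_eval, mul_assoc, integral_const_mul, RingHom.id_apply, smul_eq_mul]

theorem gaussianIntegral_apply (φ : MvPolynomial σ ℝ) :
    gaussianIntegral φ = ∫ y : σ → ℝ, eval y φ * ∏ i, exp (-y i ^ 2) := rfl

theorem gaussianIntegral_monomial (d : σ →₀ ℕ) (c : ℝ) :
    gaussianIntegral (monomial d c) = c * ∏ i, gaussianMoment (d i) := by
  simp_rw [gaussianIntegral_apply, eval_monomial_mul_gaussian, integral_const_mul, volume_pi,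
    integral_fintype_prod_eq_prod (f := fun i (t : ℝ) => t ^ d i * exp (-t ^ 2))]
  rfl

theorem gaussianIntegral_pos (hne : φ ≠ 0) (hpos : ∀ x, 0 ≤ eval x φ) :
    0 < gaussianIntegral φ := by
  obtain ⟨x, hx⟩ : ∃ x, eval x φ ≠ 0 := by
    by_contra! h
    exact hne (funext fun x => by simpa using h x)
  have hweight : ∀ y : σ → ℝ, 0 < ∏ i, exp (-y i ^ 2) := fun y =>
    Finset.prod_pos fun i _ => exp_pos _
  refine integral_pos_of_integrable_nonneg_nonzero (x := x) ?_ (integrable_eval_mul_gaussian φ)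
    (fun y => mul_nonneg (hpos y) (hweight y).le) (mul_ne_zero hx (hweight x).ne')
  exact (continuous_eval φ).mul (continuous_finsetProd _ fun i _ =>
    ((continuous_apply i).pow 2).neg.rexp)

theorem gaussianIntegral_pderiv_pderiv_monomial (i : σ) (d : σ →₀ ℕ) (c : ℝ) :
    gaussianIntegral (pderiv i (pderiv i (monomial d c))) =
      2 * d i * gaussianIntegral (monomial d c) := by
  classical
  have hrest : ∀ j ∈ Finset.univ.erase i,
      gaussianMoment ((d - Finsupp.single i 1 - Finsupp.single i 1 : σ →₀ ℕ) j) =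
        gaussianMoment (d j) :=
    fun j hj => by simp [Ne.symm (Finset.ne_of_mem_erase hj)]
  rw [pderiv_monomial, pderiv_monomial, gaussianIntegral_monomial, gaussianIntegral_monomial,
    ← Finset.mul_prod_erase _ _ (Finset.mem_univ i),
    ← Finset.mul_prod_erase _ _ (Finset.mem_univ i),
    Finset.prod_congr rfl hrest]
  simp only [Finsupp.coe_tsub, Pi.sub_apply, Finsupp.single_eq_same, Nat.sub_sub]
  linear_combination (c * ∏ j ∈ Finset.univ.erase i, gaussianMoment (d j)) *
    mul_mul_gaussianMoment_sub_two (d i)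

theorem IsHomogeneous.gaussianIntegral_laplacian (hφ : φ.IsHomogeneous m) :
    gaussianIntegral (MvPolynomial.laplacian σ ℝ φ) = 2 * m * gaussianIntegral φ := by
  conv_lhs => rw [← φ.support_sum_monomial_coeff]
  conv_rhs => rw [← φ.support_sum_monomial_coeff]
  simp only [map_sum, laplacian_apply, gaussianIntegral_pderiv_pderiv_monomial, Finset.mul_sum]
  refine Finset.sum_congr rfl fun d hd => ?_
  have hdeg : ∑ i, (d i : ℝ) = m := by
    have : d.degree = m := by
      rw [Finsupp.degree_eq_weight_one]
      exact hφ (mem_support_iff.mp hd)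
    exact_mod_cast (Finsupp.degree_eq_sum d).symm.trans this
  rw [← Finset.sum_mul, ← Finset.mul_sum, hdeg]
theorem IsHomogeneous.gaussianIntegral_laplacian_iterate (hφ : φ.IsHomogeneous m) (j : ℕ) :
    gaussianIntegral ((MvPolynomial.laplacian σ ℝ)^[j] φ) =
      (∏ t ∈ Finset.range j, 2 * ((m - 2 * t : ℕ) : ℝ)) * gaussianIntegral φ := by
  induction j with
  | zero => simp
  | succ j ih =>
    rw [Function.iterate_succ_apply', (hφ.laplacian_iterate j).gaussianIntegral_laplacian, ih,
      Finset.prod_range_succ]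
    ring

theorem IsHomogeneous.lt_two_mul_of_laplacian_iterate_eq_zero (hφ : φ.IsHomogeneous m)
    (hne : φ ≠ 0) (hpos : ∀ x, 0 ≤ eval x φ) {k : ℕ}
    (hk : (MvPolynomial.laplacian σ ℝ)^[k] φ = 0) : m < 2 * k := by
  obtain ⟨s, rfl⟩ := hφ.even_of_nonneg hne hpos
  by_contra! hks
  have hs : (MvPolynomial.laplacian σ ℝ)^[s] φ = 0 := by
    rw [← Nat.sub_add_cancel (show k ≤ s by omega), Function.iterate_add_apply, hk]
    exact Function.iterate_fixed (map_zero _) _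
  have hprod : 0 < ∏ t ∈ Finset.range s, 2 * ((s + s - 2 * t : ℕ) : ℝ) :=
    Finset.prod_pos fun t ht => by
      have : 2 * t < s + s := by have := Finset.mem_range.mp ht; omega
      simp only [Nat.ofNat_pos, mul_pos_iff_of_pos_left, Nat.cast_pos]
      omega
  have h := hφ.gaussianIntegral_laplacian_iterate s
  rw [hs, map_zero] at h
  exact (mul_pos hprod (gaussianIntegral_pos hne hpos)).ne h

end GaussianIntegral

variable {ι : Type*} [Fintype ι]

theorem contDiff_eval_euclideanSpace (φ : MvPolynomial ι ℝ) {k : WithTop ℕ∞} :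
    ContDiff ℝ k fun y : EuclideanSpace ℝ ι => eval (fun i => y i) φ :=
  AnalyticOnNhd.contDiff
    (AnalyticOnNhd.eval_continuousLinearMap'
      (fun i => (EuclideanSpace.proj i : EuclideanSpace ℝ ι →L[ℝ] ℝ)) φ)

theorem fderiv_eval_euclideanSpace_single [DecidableEq ι] (φ : MvPolynomial ι ℝ)
    (y : EuclideanSpace ℝ ι) (i : ι) :
    fderiv ℝ (fun y : EuclideanSpace ℝ ι => eval (fun i => y i) φ) y (EuclideanSpace.single i 1) =
      eval (fun i => y i) (pderiv i φ) := by
  have hdiff (ψ : MvPolynomial ι ℝ) :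
      DifferentiableAt ℝ (fun y : EuclideanSpace ℝ ι => eval (fun i => y i) ψ) y :=
    (contDiff_eval_euclideanSpace ψ (k := 1)).differentiable one_ne_zero y
  induction φ using induction_on with
  | C a => simp
  | add p q hp hq =>
    simp only [map_add]
    rw [fderiv_fun_add (hdiff p) (hdiff q)]
    simp [hp, hq]
  | mul_X p j hp =>
    simp only [map_mul, eval_X]
    have hj := PiLp.hasFDerivAt_apply (𝕜 := ℝ) 2 y j
    rw [fderiv_fun_mul (hdiff p) hj.differentiableAt, hj.fderiv]
    simp [hp, Pi.single_apply, apply_ite]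

end MvPolynomial

open MvPolynomial in
theorem lap_eval {n : ℕ} (φ : MvPolynomial (Fin n) ℝ) :
    lap (fun y : Eucl n => eval (fun i => y i) φ) =
      fun y => eval (fun i => y i) (MvPolynomial.laplacian (Fin n) ℝ φ) := by
  funext x
  rw [lap, laplacian_apply, map_sum]
  refine Finset.sum_congr rfl fun i _ => ?_
  set f := fun y : Eucl n => eval (fun i => y i) φ
  set e : Eucl n := EuclideanSpace.single i 1
  have hf' : Differentiable ℝ (fderiv ℝ f) :=
    ((contDiff_eval_euclideanSpace φ (k := 2)).fderiv_right (m := 1) le_rfl).differentiable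
      one_ne_zero
  have hpartial : (fun y => fderiv ℝ f y e) = fun y => eval (fun i => y i) (pderiv i φ) :=
    funext fun y => fderiv_eval_euclideanSpace_single φ y i
  calc iteratedFDeriv ℝ 2 f x ![e, e]
      = fderiv ℝ (fun y => fderiv ℝ f y e) x e := by
        rw [iteratedFDeriv_two_apply, fderiv_clm_apply (hf' x) (differentiableAt_const e)]
        simp
    _ = eval (fun i => x i) (pderiv i (pderiv i φ)) := by
        rw [hpartial, fderiv_eval_euclideanSpace_single]

theorem lap_iterate_eval {n : ℕ} (φ : MvPolynomial (Fin n) ℝ) (k : ℕ) :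
    lap^[k] (fun y : Eucl n => MvPolynomial.eval (fun i => y i) φ) =
      fun y => MvPolynomial.eval (fun i => y i) ((MvPolynomial.laplacian (Fin n) ℝ)^[k] φ) := by
  induction k generalizing φ with
  | zero => rfl
  | succ k ih => rw [Function.iterate_succ_apply, Function.iterate_succ_apply, lap_eval, ih]

/-- A nonnegative homogeneous polynomial annihilated by `Δ^{⌊(n+1)/2⌋}` has degree
at most `n-1`. -/
theorem nonneg_polyharmonic_degree_bound (n m : ℕ)
    (H : MvPolynomial (Fin n) ℝ) (hH : H.IsHomogeneous m) (hHne : H ≠ 0)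
    (hpos : ∀ x : Fin n → ℝ, 0 ≤ MvPolynomial.eval x H)
    (hharm : ∀ x : Eucl n,
      (lap)^[(n+1)/2] (fun y : Eucl n => MvPolynomial.eval (fun i => y i) H) x = 0) :
    m ≤ n - 1 := by
  have hpoly : (MvPolynomial.laplacian (Fin n) ℝ)^[(n + 1) / 2] H = 0 :=
    MvPolynomial.funext fun x => by simpa [lap_iterate_eval] using hharm (WithLp.toLp 2 x)
  have hlt := hH.lt_two_mul_of_laplacian_iterate_eq_zero hHne hpos hpoly
  obtain ⟨s, rfl⟩ := hH.even_of_nonneg hHne hpos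
  omega
end
end

section
/- Let g = e^{2u}|dx|² be a smooth complete conformal metric on ℝⁿ (n ≥ 3) whose scalar curvature satisfies R_g ≥ -C for some constant C > 0. Then u(x) ≥ -2 log(|x|+1) - C' for some constant C' > 0. -/
open MeasureTheory Filter Real Set Metric

noncomputable section

-- ===== auxiliary lemmas =====

lemma hasDerivAt_line {E : Type*} [NormedAddCommGroup E] [NormedSpace ℝ E] {F : Type*}
    [NormedAddCommGroup F] [NormedSpace ℝ F] {f : E → F} (hf : Differentiable ℝ f)
    (x w : E) (t₀ : ℝ) : HasDerivAt (fun t => f (x + t • w)) (fderiv ℝ f (x + t₀ • w) w) t₀ := by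
  have hline : HasDerivAt (fun t : ℝ => x + t • w) w t₀ := by
    simpa using ((hasDerivAt_id t₀).smul_const w).const_add x
  exact (hf _).hasFDerivAt.comp_hasDerivAt t₀ hline

lemma hasDerivAt_line_fderiv {n : ℕ} {f : Eucl n → ℝ} (hf : ContDiff ℝ 2 f)
    (x w : Eucl n) (t₀ : ℝ) :
    HasDerivAt (fun t => fderiv ℝ f (x + t • w) w)
      (fderiv ℝ (fderiv ℝ f) (x + t₀ • w) w w) t₀ := by
  have h1 : Differentiable ℝ (fderiv ℝ f) :=
    (hf.fderiv_right (m := 1) (by norm_num)).differentiable (by norm_num)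
  have h2 : HasDerivAt (fun t => fderiv ℝ f (x + t • w))
      (fderiv ℝ (fderiv ℝ f) (x + t₀ • w) w) t₀ := hasDerivAt_line h1 x w t₀
  simpa using h2.clm_apply (hasDerivAt_const t₀ w)

lemma iteratedFDeriv_two_line {n : ℕ} {f : Eucl n → ℝ} (hf : ContDiff ℝ 2 f) (x w : Eucl n) :
    iteratedFDeriv ℝ 2 f x ![w, w] = deriv (deriv (fun t : ℝ => f (x + t • w))) 0 := by
  have hd : deriv (fun t : ℝ => f (x + t • w)) = fun t => fderiv ℝ f (x + t • w) w :=
    funext fun t => (hasDerivAt_line (hf.differentiable (by norm_num)) x w t).deriv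
  rw [hd, iteratedFDeriv_two_apply]
  have h := (hasDerivAt_line_fderiv hf x w 0).deriv
  simp only [zero_smul, add_zero] at h
  rw [h]
  simp

lemma secondDerivTest {g : ℝ → ℝ} (hg : Differentiable ℝ g) {L : ℝ}
    (hL : HasDerivAt (deriv g) L 0) (hmin : IsLocalMin g 0) : 0 ≤ L := by
  by_contra hneg
  push_neg at hneg
  have h0 : deriv g 0 = 0 := hmin.deriv_eq_zero
  have hslope : Tendsto (slope (deriv g) 0) (nhdsWithin 0 {0}ᶜ) (nhds L) :=
    hasDerivAt_iff_tendsto_slope.mp hL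
  have hslope' : Tendsto (slope (deriv g) 0) (nhdsWithin 0 (Ioi 0)) (nhds L) :=
    hslope.mono_left (nhdsWithin_mono _ (fun t ht => ne_of_gt ht))
  have hev : ∀ᶠ t in nhdsWithin (0:ℝ) (Ioi 0), slope (deriv g) 0 t < L/2 :=
    hslope'.eventually_lt_const (by linarith)
  have hev2 : ∀ᶠ t in nhdsWithin (0:ℝ) (Ioi 0), deriv g t < 0 := by
    filter_upwards [hev, self_mem_nhdsWithin] with t ht (ht2 : t ∈ Ioi 0)
    have heq : slope (deriv g) 0 t = deriv g t / t := by
      simp [slope_def_field, h0]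
    rw [heq] at ht
    have h2 := (div_lt_iff₀ ht2).mp ht
    have h3 : L / 2 * t < 0 := mul_neg_of_neg_of_pos (by linarith) ht2
    linarith
  rw [eventually_nhdsWithin_iff] at hev2
  obtain ⟨ε, hε, hball⟩ := Metric.eventually_nhds_iff.mp hev2
  -- on (0, ε), deriv g < 0
  have hanti : ∀ t ∈ Ioo (0:ℝ) ε, g t < g 0 := by
    intro t ht
    have : StrictAntiOn g (Icc 0 t) := by
      apply strictAntiOn_of_deriv_neg (convex_Icc 0 t) (hg.continuous.continuousOn)
      intro y hy
      rw [interior_Icc] at hy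
      refine hball ?_ hy.1
      rw [Real.dist_eq, sub_zero, abs_of_pos hy.1]; exact lt_trans hy.2 ht.2
    have := this (Set.left_mem_Icc.mpr ht.1.le) (Set.right_mem_Icc.mpr ht.1.le) ht.1
    exact this
  have hfreq : ∀ᶠ t in nhdsWithin (0:ℝ) (Ioi 0), g 0 ≤ g t :=
    hmin.filter_mono nhdsWithin_le_nhds
  have hmem : Ioo (0:ℝ) ε ∈ nhdsWithin (0:ℝ) (Ioi 0) :=
    Ioo_mem_nhdsGT_of_mem ⟨le_refl _, hε⟩
  obtain ⟨t, ht1, ht2⟩ := (hfreq.and (eventually_of_mem hmem (fun t ht => ht))).exists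
  exact absurd ht1 (not_le.mpr (hanti t ht2))


-- assume earlier lemmas:

lemma lap_nonneg_localMin {n : ℕ} {f : Eucl n → ℝ} (hf : ContDiff ℝ 2 f) {p : Eucl n}
    (hmin : IsLocalMin f p) : 0 ≤ lap f p := by
  apply Finset.sum_nonneg
  intro i _
  set w := EuclideanSpace.single i (1:ℝ)
  have hfd : Differentiable ℝ f := hf.differentiable (by norm_num)
  have hg : Differentiable ℝ (fun t : ℝ => f (p + t • w)) :=
    fun t => ((hasDerivAt_line hfd p w t)).differentiableAt
  have hderiv : deriv (fun t : ℝ => f (p + t • w)) = fun t => fderiv ℝ f (p + t • w) w :=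
    funext fun t => (hasDerivAt_line hfd p w t).deriv
  have hL : HasDerivAt (deriv (fun t : ℝ => f (p + t • w)))
      (fderiv ℝ (fderiv ℝ f) p w w) 0 := by
    rw [hderiv]
    simpa using hasDerivAt_line_fderiv hf p w 0
  have hminline : IsLocalMin (fun t : ℝ => f (p + t • w)) 0 := by
    have hc : ContinuousAt (fun t : ℝ => p + t • w) 0 :=
      (continuous_const.add (continuous_id.smul continuous_const)).continuousAt
    have htend : Tendsto (fun t : ℝ => p + t • w) (nhds 0) (nhds p) := by
      simpa using hc.tendsto
    have := htend.eventually hmin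
    simpa [IsLocalMin, IsMinFilter] using this
  have h := secondDerivTest hg hL hminline
  rw [iteratedFDeriv_two_apply]
  simpa using h

lemma norm_sq_eq_sum {n : ℕ} (x : Eucl n) : ‖x‖^2 = ∑ i, (x i)^2 := by
  rw [EuclideanSpace.norm_eq, Real.sq_sqrt (by positivity)]
  simp [Real.norm_eq_abs, sq_abs]

lemma grad_sq_eq_sum {n : ℕ} (u : Eucl n → ℝ) (x : Eucl n) :
    ‖gradient u x‖^2 = ∑ i, (fderiv ℝ u x (EuclideanSpace.single i 1))^2 := by
  have h : ∀ v, fderiv ℝ u x v = inner ℝ (gradient u x) v := by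
    intro v
    rw [gradient]
    exact (InnerProductSpace.toDual_symm_apply).symm
  rw [norm_sq_eq_sum]
  congr 1
  funext i
  rw [h]
  rw [EuclideanSpace.inner_single_right]
  simp

lemma lap_add {n : ℕ} {f g : Eucl n → ℝ} (hf : ContDiff ℝ 2 f) (hg : ContDiff ℝ 2 g)
    (x : Eucl n) : lap (fun y => f y + g y) x = lap f x + lap g x := by
  unfold lap
  rw [← Finset.sum_add_distrib]
  congr 1; funext i
  have : (fun y => f y + g y) = f + g := rfl
  rw [this, iteratedFDeriv_add_apply hf.contDiffAt hg.contDiffAt]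
  rfl

lemma lap_smul {n : ℕ} {f : Eucl n → ℝ} (hf : ContDiff ℝ 2 f) (c : ℝ)
    (x : Eucl n) : lap (fun y => c * f y) x = c * lap f x := by
  unfold lap
  rw [Finset.mul_sum]
  congr 1; funext i
  have : (fun y => c * f y) = c • f := rfl
  rw [this, iteratedFDeriv_const_smul_apply hf.contDiffAt]
  rfl


/-- second derivative at 0 of `t ↦ (c₀+c₁t+t²)^σ`. -/
lemma deriv_deriv_quad_rpow (c₀ c₁ σ : ℝ) (hpos : ∀ t : ℝ, 1 ≤ c₀ + c₁*t + t^2) :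
    deriv (deriv (fun t : ℝ => (c₀ + c₁*t + t^2) ^ σ)) 0
      = σ*(σ-1)*c₀^(σ-2)*c₁^2 + 2*σ*c₀^(σ-1) := by
  have hP : ∀ t : ℝ, HasDerivAt (fun t : ℝ => c₀ + c₁*t + t^2) (c₁ + 2*t) t := by
    intro t
    have h1 : HasDerivAt (fun t : ℝ => c₀ + c₁*t + t^2) (0 + c₁*1 + 2*t^1) t :=
      ((hasDerivAt_const t c₀).add ((hasDerivAt_id t).const_mul c₁)).add (hasDerivAt_pow 2 t)
    simpa using h1.congr_deriv (by ring)
  have hPne : ∀ t : ℝ, c₀ + c₁*t + t^2 ≠ 0 := fun t => by have := hpos t; linarith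
  have hg : ∀ t : ℝ, HasDerivAt (fun t : ℝ => (c₀ + c₁*t + t^2) ^ σ)
      (σ * (c₀ + c₁*t + t^2)^(σ-1) * (c₁ + 2*t)) t :=
    fun t => ((hP t).rpow_const (Or.inl (hPne t))).congr_deriv (by ring)
  rw [funext fun t => (hg t).deriv]
  have h2 : HasDerivAt (fun t : ℝ => σ * (c₀ + c₁*t + t^2)^(σ-1) * (c₁ + 2*t))
      ((σ * ((σ-1) * (c₀ + c₁*0 + 0^2)^(σ-1-1) * (c₁ + 2*0))) * (c₁ + 2*0)
        + (σ * (c₀ + c₁*0 + 0^2)^(σ-1)) * 2) 0 := by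
    have ha : HasDerivAt (fun t : ℝ => σ * (c₀ + c₁*t + t^2)^(σ-1))
        (σ * ((σ-1) * (c₀ + c₁*0 + 0^2)^(σ-1-1) * (c₁ + 2*0))) 0 :=
      (((hP 0).rpow_const (Or.inl (hPne 0))).congr_deriv (by ring)).const_mul σ
    have hb : HasDerivAt (fun t : ℝ => c₁ + 2*t) 2 0 := by
      simpa using ((hasDerivAt_id (0:ℝ)).const_mul 2).const_add c₁
    exact ha.mul hb
  rw [h2.deriv, show σ - 1 - 1 = σ - 2 from by ring]
  norm_num
  ring

lemma lap_rpow_q {n : ℕ} (σ : ℝ) (x : Eucl n) :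
    lap (fun y : Eucl n => (1 + ‖y‖^2) ^ σ) x =
      σ*(σ-1)*(1+‖x‖^2)^(σ-2) * (4*‖x‖^2) + 2*n*σ*(1+‖x‖^2)^(σ-1) := by
  have hQ : ContDiff ℝ 2 (fun y : Eucl n => 1 + ‖y‖^2) :=
    contDiff_const.add (contDiff_norm_sq ℝ)
  have hQ1 : ∀ y : Eucl n, (1:ℝ) ≤ 1 + ‖y‖^2 := fun y => le_add_of_nonneg_right (sq_nonneg _)
  have hf : ContDiff ℝ 2 (fun y : Eucl n => (1 + ‖y‖^2) ^ σ) := by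
    rw [contDiff_iff_contDiffAt]
    intro y
    exact hQ.contDiffAt.rpow_const_of_ne (by have := hQ1 y; intro h; rw [h] at this; linarith)
  have hline : ∀ (i : Fin n) (t : ℝ),
      (1 : ℝ) + ‖x + t • EuclideanSpace.single i (1:ℝ)‖^2
        = (1 + ‖x‖^2) + (2 * x i) * t + t^2 := by
    intro i t
    rw [norm_add_sq_real, real_inner_smul_right, norm_smul]
    rw [EuclideanSpace.inner_single_right]
    simp [EuclideanSpace.norm_single, Real.norm_eq_abs, mul_pow, sq_abs]
    ring
  have hterm : ∀ i : Fin n,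
      iteratedFDeriv ℝ 2 (fun y : Eucl n => (1 + ‖y‖^2) ^ σ) x
        ![EuclideanSpace.single i 1, EuclideanSpace.single i 1]
      = σ*(σ-1)*(1+‖x‖^2)^(σ-2) * (2 * x i)^2 + 2*σ*(1+‖x‖^2)^(σ-1) := by
    intro i
    rw [iteratedFDeriv_two_line hf x _]
    have heq : (fun t : ℝ => (1 + ‖x + t • EuclideanSpace.single i (1:ℝ)‖^2) ^ σ)
        = fun t : ℝ => ((1 + ‖x‖^2) + (2 * x i) * t + t^2) ^ σ := by
      funext t; rw [hline i t]
    rw [heq]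
    exact deriv_deriv_quad_rpow (1 + ‖x‖^2) (2 * x i) σ
      (fun t => by rw [← hline i t]; exact hQ1 _)
  unfold lap
  rw [Finset.sum_congr rfl (fun i _ => hterm i)]
  rw [Finset.sum_add_distrib, ← Finset.mul_sum]
  have hsum : ∑ i : Fin n, (2 * x i)^2 = 4 * ‖x‖^2 := by
    rw [norm_sq_eq_sum x, Finset.mul_sum]
    exact Finset.sum_congr rfl (fun i _ => by ring)
  rw [hsum, Finset.sum_const, Finset.card_univ, Fintype.card_fin, nsmul_eq_mul]
  ring

lemma lap_exp {n : ℕ} {u : Eucl n → ℝ} (hu : ContDiff ℝ 2 u) (β : ℝ) (x : Eucl n) :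
    lap (fun y => Real.exp (β * u y)) x
      = β * Real.exp (β * u x) *
        (lap u x + β * ∑ i, (fderiv ℝ u x (EuclideanSpace.single i 1))^2) := by
  have hv : ContDiff ℝ 2 (fun y => Real.exp (β * u y)) :=
    Real.contDiff_exp.comp (contDiff_const.mul hu)
  have hud : Differentiable ℝ u := hu.differentiable (by norm_num)
  have hterm : ∀ i : Fin n,
      iteratedFDeriv ℝ 2 (fun y => Real.exp (β * u y)) x
        ![EuclideanSpace.single i 1, EuclideanSpace.single i 1]
      = β * Real.exp (β * u x) *
          (fderiv ℝ (fderiv ℝ u) x (EuclideanSpace.single i 1) (EuclideanSpace.single i 1)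
           + β * (fderiv ℝ u x (EuclideanSpace.single i 1))^2) := by
    intro i
    set w := EuclideanSpace.single i (1:ℝ)
    rw [iteratedFDeriv_two_line hv x w]
    have hder : deriv (fun t : ℝ => Real.exp (β * u (x + t • w)))
        = fun t => Real.exp (β * u (x + t • w)) * (β * fderiv ℝ u (x + t • w) w) := by
      funext t
      exact (((hasDerivAt_line hud x w t).const_mul β).exp).deriv
    rw [hder]
    have hD : HasDerivAt (fun t : ℝ => Real.exp (β * u (x + t • w)) * (β * fderiv ℝ u (x + t • w) w))
        ((Real.exp (β * u (x + (0:ℝ) • w)) * (β * fderiv ℝ u (x + (0:ℝ) • w) w)) * (β * fderiv ℝ u (x + (0:ℝ) • w) w)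
          + Real.exp (β * u (x + (0:ℝ) • w)) * (β * fderiv ℝ (fderiv ℝ u) (x + (0:ℝ) • w) w w)) 0 := by
      have h1 : HasDerivAt (fun t : ℝ => Real.exp (β * u (x + t • w)))
          (Real.exp (β * u (x + (0:ℝ) • w)) * (β * fderiv ℝ u (x + (0:ℝ) • w) w)) 0 :=
        ((hasDerivAt_line hud x w 0).const_mul β).exp
      have h2 : HasDerivAt (fun t : ℝ => β * fderiv ℝ u (x + t • w) w)
          (β * fderiv ℝ (fderiv ℝ u) (x + (0:ℝ) • w) w w) 0 :=
        (hasDerivAt_line_fderiv hu x w 0).const_mul β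
      exact h1.mul h2
    rw [hD.deriv]
    simp only [zero_smul, add_zero]
    ring
  have hlapu : lap u x = ∑ i : Fin n,
      fderiv ℝ (fderiv ℝ u) x (EuclideanSpace.single i 1) (EuclideanSpace.single i 1) := by
    unfold lap
    congr 1; funext i
    rw [iteratedFDeriv_two_apply]
    simp
  rw [hlapu]
  unfold lap
  rw [Finset.sum_congr rfl (fun i _ => hterm i)]
  simp only [mul_add, Finset.sum_add_distrib, Finset.mul_sum, mul_assoc]


set_option maxHeartbeats 2000000 in
/-- Lemma 3.3: a complete conformal metric with scalar curvature bounded below has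
conformal factor bounded below by `-2log(|x|+1) - C`. -/
theorem lower_bound_conformal_factor (n : ℕ) (hn : 3 ≤ n) (u : Eucl n → ℝ)
    (hu : ContDiff ℝ (⊤ : ℕ∞) u) (hcomplete : ConfComplete u) (C : ℝ) (hC : 0 < C)
    (hscal : ∀ x : Eucl n,
      -C ≤ 2 * ((n : ℝ) - 1) * Real.exp (-2 * u x)
          * (-(lap u x) - (((n : ℝ) - 2)/2) * ‖gradient u x‖^2)) :
    ∃ C' : ℝ, 0 < C' ∧ ∀ x : Eucl n, u x ≥ -2 * Real.log (‖x‖ + 1) - C' := by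
  have hN : (3:ℝ) ≤ (n:ℝ) := by exact_mod_cast hn
  set N : ℝ := (n:ℝ) with hNdef
  set β : ℝ := (N - 2)/2 with hβdef
  have hβ : 0 < β := by rw [hβdef]; linarith
  have hβh : 1/2 ≤ β := by rw [hβdef]; linarith
  set a : ℝ := C / (2*(N-1)) with hadef
  have ha : 0 < a := div_pos hC (by linarith)
  have hu2 : ContDiff ℝ 2 u := hu.of_le (WithTop.coe_le_coe.mpr (le_top : (2:ℕ∞) ≤ ⊤))
  have hucont : Continuous u := hu2.continuous
  -- the key differential inequality
  have key : ∀ x, lap u x + β * ‖gradient u x‖^2 ≤ a * Real.exp (2 * u x) := by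
    intro x
    have h := hscal x
    have hE : Real.exp (-2 * u x) * Real.exp (2 * u x) = 1 := by
      rw [← Real.exp_add]; norm_num
    have hEpos := Real.exp_pos (2 * u x)
    have h2N : (0:ℝ) < 2*(N-1) := by linarith
    have h3 := mul_le_mul_of_nonneg_right h hEpos.le
    have h5 : 2*(N-1) * Real.exp (-2*u x) * (-(lap u x) - β*‖gradient u x‖^2) * Real.exp (2*u x)
        = 2*(N-1) * (-(lap u x) - β*‖gradient u x‖^2) := by
      calc 2*(N-1) * Real.exp (-2*u x) * (-(lap u x) - β*‖gradient u x‖^2) * Real.exp (2*u x)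
          = 2*(N-1) * (-(lap u x) - β*‖gradient u x‖^2)
            * (Real.exp (-2*u x) * Real.exp (2*u x)) := by ring
        _ = 2*(N-1) * (-(lap u x) - β*‖gradient u x‖^2) := by rw [hE]; ring
    rw [h5] at h3
    have h4 : 2*(N-1)*(lap u x + β * ‖gradient u x‖^2) ≤ C * Real.exp (2*u x) := by
      linarith [h3]
    have goal' : lap u x + β * ‖gradient u x‖^2 ≤ (C * Real.exp (2*u x)) / (2*(N-1)) := by
      rw [le_div_iff₀ h2N]; linarith
    calc lap u x + β * ‖gradient u x‖^2 ≤ (C * Real.exp (2*u x)) / (2*(N-1)) := goal'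
      _ = a * Real.exp (2*u x) := by rw [hadef]; ring
  -- basic objects
  set q : Eucl n → ℝ := fun y => 1 + ‖y‖^2 with hqdef
  have hq1 : ∀ y, (1:ℝ) ≤ q y := fun y => le_add_of_nonneg_right (sq_nonneg _)
  have hqpos : ∀ y, (0:ℝ) < q y := fun y => lt_of_lt_of_le one_pos (hq1 y)
  set v : Eucl n → ℝ := fun y => Real.exp (β * u y) with hvdef
  have hv2 : ContDiff ℝ 2 v := Real.contDiff_exp.comp (contDiff_const.mul hu2)
  have hvpos : ∀ y, 0 < v y := fun y => Real.exp_pos _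
  have hvcont : Continuous v := hv2.continuous
  have lapv_le : ∀ x, lap v x ≤ a * β * v x * Real.exp (2 * u x) := by
    intro x
    have h1 : lap v x = β * v x * (lap u x + β * ‖gradient u x‖^2) := by
      rw [hvdef, lap_exp hu2 β x, ← grad_sq_eq_sum]
    rw [h1]
    have h2 := key x
    have h3 : 0 ≤ β * v x := le_of_lt (mul_pos hβ (hvpos x))
    calc β * v x * (lap u x + β * ‖gradient u x‖^2)
        ≤ β * v x * (a * Real.exp (2 * u x)) := mul_le_mul_of_nonneg_left h2 h3
      _ = a * β * v x * Real.exp (2 * u x) := by ring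
  set η : Eucl n → ℝ := fun y => q y ^ (-β) + q y ^ (-β - 1/2) with hηdef
  have hQ2 : ContDiff ℝ 2 q := contDiff_const.add (contDiff_norm_sq ℝ)
  have hqne : ∀ y, q y ≠ 0 := fun y => ne_of_gt (hqpos y)
  have hη2 : ContDiff ℝ 2 η := by
    apply ContDiff.add
    · rw [contDiff_iff_contDiffAt]; intro y
      exact hQ2.contDiffAt.rpow_const_of_ne (hqne y)
    · rw [contDiff_iff_contDiffAt]; intro y
      exact hQ2.contDiffAt.rpow_const_of_ne (hqne y)
  have hηcont : Continuous η := hη2.continuous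
  have hηpos : ∀ y, 0 < η y :=
    fun y => add_pos (rpow_pos_of_pos (hqpos y) _) (rpow_pos_of_pos (hqpos y) _)
  have hη_le : ∀ y, η y ≤ 2 * q y ^ (-β) := by
    intro y
    have : q y ^ (-β-1/2) ≤ q y ^ (-β) :=
      Real.rpow_le_rpow_of_exponent_le (hq1 y) (by linarith)
    rw [hηdef]; dsimp only; linarith
  have hη_ge : ∀ y, q y ^ (-β) ≤ η y :=
    fun y => le_add_of_nonneg_right (rpow_pos_of_pos (hqpos y) _).le
  have lapη : ∀ x, lap η x =
      ((-β)*(-β-1)*(q x)^(-β-2) * (4*‖x‖^2) + 2*N*(-β)*(q x)^(-β-1))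
      + ((-β-1/2)*(-β-1/2-1)*(q x)^(-β-1/2-2) * (4*‖x‖^2)
          + 2*N*(-β-1/2)*(q x)^(-β-1/2-1)) := by
    intro x
    have e1 : lap η x = lap (fun y : Eucl n => (1+‖y‖^2) ^ (-β)) x
        + lap (fun y : Eucl n => (1+‖y‖^2) ^ (-β-1/2)) x := by
      apply lap_add
      · rw [contDiff_iff_contDiffAt]; intro y
        exact hQ2.contDiffAt.rpow_const_of_ne (hqne y)
      · rw [contDiff_iff_contDiffAt]; intro y
        exact hQ2.contDiffAt.rpow_const_of_ne (hqne y)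
    rw [e1, lap_rpow_q, lap_rpow_q]
  -- constants
  set M : ℝ := Real.log (2*a*β + 1) + 1 with hMdef
  have hM0 : 0 < M := by
    have := Real.log_nonneg (by nlinarith : (1:ℝ) ≤ 2*a*β + 1)
    rw [hMdef]; linarith
  have hMkey : 2*a*β*Real.exp (-(2*M)) ≤ 1 := by
    have h1 : 2*a*β + 1 ≤ Real.exp M := by
      rw [hMdef, Real.exp_add, Real.exp_log (by nlinarith)]
      nlinarith [Real.add_one_le_exp (1:ℝ), mul_pos ha hβ]
    have h2 : Real.exp M ≤ Real.exp (2*M) := Real.exp_le_exp.mpr (by linarith)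
    have h4 : Real.exp (2*M) * Real.exp (-(2*M)) = 1 := by
      rw [← Real.exp_add]; simp
    nlinarith [Real.exp_pos (-(2*M))]
  set r₀ : ℝ := 3*N with hr₀def
  have hr₀9 : (9:ℝ) ≤ r₀ := by rw [hr₀def]; linarith
  -- minimum of v and of u on the closed ball
  obtain ⟨z, hz, hzmin'⟩ := (isCompact_closedBall (0:Eucl n) r₀).exists_isMinOn
      ⟨0, mem_closedBall_self (by linarith)⟩ hvcont.continuousOn
  have hzmin : ∀ y ∈ closedBall (0:Eucl n) r₀, v z ≤ v y := isMinOn_iff.mp hzmin'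
  obtain ⟨z', hz', hz'min'⟩ := (isCompact_closedBall (0:Eucl n) r₀).exists_isMinOn
      ⟨0, mem_closedBall_self (by linarith)⟩ hucont.continuousOn
  have hz'min : ∀ y ∈ closedBall (0:Eucl n) r₀, u z' ≤ u y := isMinOn_iff.mp hz'min'
  set m₁ : ℝ := Real.exp (-β*M) * (2:ℝ)^(-β) / 2 with hm₁def
  have hm₁ : 0 < m₁ := by
    have := rpow_pos_of_pos (two_pos (α := ℝ)) (-β)
    have := Real.exp_pos (-β*M)
    rw [hm₁def]; positivity
  set m₂ : ℝ := v z / 2 with hm₂def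
  have hm₂ : 0 < m₂ := by rw [hm₂def]; have := hvpos z; positivity
  set m : ℝ := min m₁ m₂ with hmdef
  have hm : 0 < m := lt_min hm₁ hm₂
  -- outer region bound
  have houter : ∀ x : Eucl n, -2*Real.log (‖x‖+1) - M ≤ u x → m₁ * η x ≤ v x := by
    intro x hx
    have hr1 : (0:ℝ) < ‖x‖ + 1 := by linarith [norm_nonneg x]
    have step1 : Real.exp (-β*M) * (‖x‖+1) ^ (-(2*β)) ≤ v x := by
      have h1 : β*(-2*Real.log (‖x‖+1) - M) ≤ β * u x := mul_le_mul_of_nonneg_left hx hβ.le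
      have h2 : Real.exp (β*(-2*Real.log (‖x‖+1) - M))
          = Real.exp (-β*M) * (‖x‖+1)^(-(2*β)) := by
        rw [Real.rpow_def_of_pos hr1, ← Real.exp_add]
        congr 1; ring
      rw [← h2]
      exact Real.exp_le_exp.mpr h1
    have step2 : (2:ℝ)^(-β) * q x ^ (-β) ≤ (‖x‖+1) ^ (-(2*β)) := by
      have e1 : ((‖x‖:ℝ)+1)^(-(2*β)) = (((‖x‖:ℝ)+1)^(2:ℕ)) ^ (-β) := by
        rw [← Real.rpow_natCast (‖x‖+1) 2, ← Real.rpow_mul hr1.le]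
        congr 1; push_cast; ring
      have e2 : ((‖x‖:ℝ)+1)^(2:ℕ) ≤ 2 * q x := by
        have hqx : q x = 1 + ‖x‖^2 := rfl
        nlinarith [sq_nonneg (‖x‖ - 1)]
      have e3 : ((2:ℝ) * q x) ^ (-β) ≤ ((((‖x‖:ℝ)+1))^(2:ℕ)) ^ (-β) :=
        Real.rpow_le_rpow_of_nonpos (by positivity) e2 (by linarith)
      have e4 : ((2:ℝ) * q x) ^ (-β) = 2^(-β) * q x^(-β) :=
        Real.mul_rpow (by norm_num) (hqpos x).le
      rw [e1]; rw [e4] at e3; exact e3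
    calc m₁ * η x ≤ m₁ * (2 * q x ^ (-β)) := mul_le_mul_of_nonneg_left (hη_le x) hm₁.le
      _ = Real.exp (-β*M) * ((2:ℝ)^(-β) * q x ^ (-β)) := by rw [hm₁def]; ring
      _ ≤ Real.exp (-β*M) * (‖x‖+1)^(-(2*β)) :=
          mul_le_mul_of_nonneg_left step2 (Real.exp_pos _).le
      _ ≤ v x := step1
  -- ball bound
  have hball : ∀ x : Eucl n, ‖x‖ ≤ r₀ → m₂ * η x ≤ v x := by
    intro x hx
    have h1 : η x ≤ 2 := by
      have h2 : q x ^ (-β) ≤ 1 :=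
        Real.rpow_le_one_of_one_le_of_nonpos (hq1 x) (by linarith)
      have := hη_le x
      linarith
    have h3 : v z ≤ v x := hzmin x (mem_closedBall_zero_iff.mpr hx)
    calc m₂ * η x ≤ m₂ * 2 := mul_le_mul_of_nonneg_left h1 hm₂.le
      _ = v z := by rw [hm₂def]; ring
      _ ≤ v x := h3
  -- the key claim, by the maximum principle
  have claim : ∀ x : Eucl n, r₀ ≤ ‖x‖ → m * η x ≤ v x := by
    intro x₀ hx₀
    by_contra hcon
    push_neg at hcon
    set w : Eucl n → ℝ := fun y => v y + (-m) * η y with hwdef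
    have hw2 : ContDiff ℝ 2 w := hv2.add (contDiff_const.mul hη2)
    have hwcont : Continuous w := hw2.continuous
    have hwx₀ : w x₀ < 0 := by
      have : w x₀ = v x₀ + (-m) * η x₀ := rfl
      rw [this]; linarith
    have houtw : ∀ y, w y < 0 → u y < -2*Real.log (‖y‖+1) - M := by
      intro y hwy
      by_contra hcon2
      push_neg at hcon2
      have h1 := houter y hcon2
      have hmm : m * η y ≤ m₁ * η y :=
        mul_le_mul_of_nonneg_right (min_le_left _ _) (hηpos y).le
      have : w y = v y + (-m) * η y := rfl
      rw [this] at hwy; linarith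
    have hsphw : ∀ y : Eucl n, ‖y‖ ≤ r₀ → 0 ≤ w y := by
      intro y hy
      have h1 := hball y hy
      have hmm : m * η y ≤ m₂ * η y :=
        mul_le_mul_of_nonneg_right (min_le_right _ _) (hηpos y).le
      have : w y = v y + (-m) * η y := rfl
      rw [this]; linarith
    set ε : ℝ := -(w x₀) with hεdef
    have hε : 0 < ε := by rw [hεdef]; linarith
    set K : Set (Eucl n) := {y | r₀ ≤ ‖y‖} ∩ {y | w y ≤ w x₀} with hKdef
    have hKclosed : IsClosed K :=
      IsClosed.inter (isClosed_le continuous_const continuous_norm)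
        (isClosed_le hwcont continuous_const)
    have hKbound : K ⊆ closedBall 0 (2*m/ε) := by
      intro y hy
      obtain ⟨hy1, hy2⟩ := hy
      have hy1' : r₀ ≤ ‖y‖ := hy1
      have hy2' : w y ≤ w x₀ := hy2
      have hwy : w y ≤ -ε := by rw [hεdef]; linarith [hy2']
      have hweq : w y = v y + (-m) * η y := rfl
      have hηy : ε ≤ m * η y := by rw [hweq] at hwy; linarith [hvpos y]
      have hy9 : (9:ℝ) ≤ ‖y‖ := le_trans hr₀9 hy1'
      have hypos : (0:ℝ) < ‖y‖ := by linarith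
      have h1 : q y ^ (-β) ≤ q y ^ (-(1/2) : ℝ) :=
        Real.rpow_le_rpow_of_exponent_le (hq1 y) (by linarith)
      have h2 : q y ^ (-(1/2):ℝ) ≤ ‖y‖⁻¹ := by
        have e1 : q y ^ (-(1/2):ℝ) = (Real.sqrt (q y))⁻¹ := by
          rw [Real.rpow_neg (hqpos y).le, ← Real.sqrt_eq_rpow]
        have e2 : ‖y‖ ≤ Real.sqrt (q y) := by
          have hqy : q y = 1 + ‖y‖^2 := rfl
          rw [show ‖y‖ = Real.sqrt (‖y‖^2) from (Real.sqrt_sq (norm_nonneg y)).symm]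
          apply Real.sqrt_le_sqrt
          rw [hqy]; linarith
        rw [e1]
        exact inv_anti₀ hypos e2
      have hη2' : η y ≤ 2 * ‖y‖⁻¹ := by
        have h0 := hη_le y
        have h3 : q y ^ (-β) ≤ ‖y‖⁻¹ := le_trans h1 h2
        exact le_trans h0 (mul_le_mul_of_nonneg_left h3 (by norm_num))
      have h4 : ε ≤ m * (2 * ‖y‖⁻¹) :=
        le_trans hηy (mul_le_mul_of_nonneg_left hη2' hm.le)
      rw [mem_closedBall_zero_iff, le_div_iff₀ hε]
      have hinv : ‖y‖⁻¹ * ‖y‖ = 1 := inv_mul_cancel₀ (ne_of_gt hypos)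
      have h5 := mul_le_mul_of_nonneg_right h4 (norm_nonneg y)
      have h6 : m * (2 * ‖y‖⁻¹) * ‖y‖ = 2*m*(‖y‖⁻¹*‖y‖) := by ring
      rw [h6, hinv, mul_one] at h5
      linarith
    have hKcompact : IsCompact K :=
      (isCompact_closedBall (0:Eucl n) (2*m/ε)).of_isClosed_subset hKclosed hKbound
    have hKne : K.Nonempty := ⟨x₀, ⟨hx₀, le_refl (w x₀)⟩⟩
    obtain ⟨p, hpK, hpmin'⟩ := hKcompact.exists_isMinOn hKne hwcont.continuousOn
    have hpmin : ∀ y ∈ K, w p ≤ w y := isMinOn_iff.mp hpmin'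
    have hpw : w p ≤ w x₀ := hpK.2
    have hglobal : ∀ y, r₀ ≤ ‖y‖ → w p ≤ w y := by
      intro y hy
      by_cases hyK : y ∈ K
      · exact hpmin y hyK
      · have h1 : ¬ (w y ≤ w x₀) := fun h => hyK ⟨hy, h⟩
        push_neg at h1; linarith
    have hpr : r₀ < ‖p‖ := by
      have h1' : r₀ ≤ ‖p‖ := hpK.1
      rcases lt_or_eq_of_le h1' with h | h
      · exact h
      · exfalso
        have := hsphw p (le_of_eq h.symm)
        linarith [hwx₀, hpw]
    have hup : u p < -2*Real.log (‖p‖+1) - M := houtw p (by linarith)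
    have hlocmin : IsLocalMin w p := by
      have hopen : {y : Eucl n | r₀ < ‖y‖} ∈ nhds p :=
        (isOpen_lt continuous_const continuous_norm).mem_nhds hpr
      filter_upwards [hopen] with y hy using hglobal y (le_of_lt hy)
    have hlapw : 0 ≤ lap w p := lap_nonneg_localMin hw2 hlocmin
    have hlapw_eq : lap w p = lap v p + (-m) * lap η p := by
      rw [hwdef, lap_add hv2 (contDiff_const.mul hη2), lap_smul hη2 (-m)]
    have hQp : (0:ℝ) < q p := hqpos p
    have hrpos : (0:ℝ) < ‖p‖ := by linarith [hr₀9]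
    have hvp : v p < m * η p := by
      have h1 : w p = v p + (-m) * η p := rfl
      have h2 : w p < 0 := by linarith [hpw, hwx₀]
      rw [h1] at h2; linarith
    -- exp(2 u p) bound
    have hE2 : Real.exp (2*u p) < Real.exp (-(2*M)) * (q p)^((-2):ℝ) := by
      have hr1 : (0:ℝ) < ‖p‖ + 1 := by linarith
      have h1 : Real.exp (2*u p) < Real.exp (2*(-2*Real.log (‖p‖+1) - M)) :=
        Real.exp_lt_exp.mpr (by linarith)
      have h2 : Real.exp (2*(-2*Real.log (‖p‖+1) - M))
          = Real.exp (-(2*M)) * (‖p‖+1)^((-4):ℝ) := by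
        rw [Real.rpow_def_of_pos hr1, ← Real.exp_add]; congr 1; ring
      have h3 : ((‖p‖:ℝ)+1)^((-4):ℝ) ≤ (q p)^((-2):ℝ) := by
        have e1 : ((‖p‖:ℝ)+1)^((-4):ℝ) = ((((‖p‖:ℝ)+1))^(4:ℕ))^((-1):ℝ) := by
          rw [← Real.rpow_natCast (‖p‖+1) 4, ← Real.rpow_mul hr1.le]
          congr 1; push_cast; ring
        have e2 : (q p)^((-2):ℝ) = ((q p)^(2:ℕ))^((-1):ℝ) := by
          rw [← Real.rpow_natCast (q p) 2, ← Real.rpow_mul hQp.le]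
          congr 1; push_cast; ring
        have e3 : (q p)^(2:ℕ) ≤ ((‖p‖:ℝ)+1)^(4:ℕ) := by
          have hqp : q p = 1 + ‖p‖^2 := rfl
          have b1 : q p ≤ (‖p‖+1)^2 := by rw [hqp]; nlinarith [norm_nonneg p]
          calc (q p)^(2:ℕ) ≤ ((‖p‖+1)^2)^(2:ℕ) := pow_le_pow_left₀ hQp.le b1 2
            _ = ((‖p‖:ℝ)+1)^(4:ℕ) := by ring
        rw [e1, e2]
        exact Real.rpow_le_rpow_of_nonpos (by positivity) e3 (by norm_num)
      calc Real.exp (2*u p) < Real.exp (-(2*M)) * (‖p‖+1)^((-4):ℝ) := by rw [← h2]; exact h1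
        _ ≤ Real.exp (-(2*M)) * (q p)^((-2):ℝ) :=
            mul_le_mul_of_nonneg_left h3 (Real.exp_pos _).le
    -- upper bound for lap v p
    have hstep : lap v p < m * (q p)^(-β-2) := by
      have h1 := lapv_le p
      have hv' : v p < m * (2*(q p)^(-β)) := by
        have h0 := mul_le_mul_of_nonneg_left (hη_le p) hm.le
        linarith
      have h2 : v p * Real.exp (2*u p)
          < (m * (2*(q p)^(-β))) * (Real.exp (-(2*M)) * (q p)^((-2):ℝ)) :=
        mul_lt_mul'' hv' hE2 (hvpos p).le (Real.exp_pos _).le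
      have h3 : a * β * (v p * Real.exp (2*u p))
          < a * β * ((m * (2*(q p)^(-β))) * (Real.exp (-(2*M)) * (q p)^((-2):ℝ))) :=
        mul_lt_mul_of_pos_left h2 (mul_pos ha hβ)
      have hQβ : (q p)^(-β) * (q p)^((-2):ℝ) = (q p)^(-β-2) := by
        rw [show (-β-2 : ℝ) = (-β) + (-2:ℝ) from by ring, Real.rpow_add hQp]
      have h4 : a * β * ((m * (2*(q p)^(-β))) * (Real.exp (-(2*M)) * (q p)^((-2):ℝ)))
          ≤ m * (q p)^(-β-2) := by
        have hpos : (0:ℝ) ≤ m * ((q p)^(-β) * (q p)^((-2):ℝ)) := by positivity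
        calc a * β * ((m * (2*(q p)^(-β))) * (Real.exp (-(2*M)) * (q p)^((-2):ℝ)))
            = (2*a*β*Real.exp (-(2*M))) * (m * ((q p)^(-β) * (q p)^((-2):ℝ))) := by ring
          _ ≤ 1 * (m * ((q p)^(-β) * (q p)^((-2):ℝ))) :=
              mul_le_mul_of_nonneg_right hMkey hpos
          _ = m * (q p)^(-β-2) := by rw [one_mul, hQβ]
      calc lap v p ≤ a * β * v p * Real.exp (2*u p) := h1
        _ = a * β * (v p * Real.exp (2*u p)) := by ring
        _ < a * β * ((m * (2*(q p)^(-β))) * (Real.exp (-(2*M)) * (q p)^((-2):ℝ))) := h3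
        _ ≤ m * (q p)^(-β-2) := h4
    -- lower bound for lap η p
    have hlapηp : (q p)^(-β-2) ≤ lap η p := by
      set S : ℝ := (q p)^(-(1/2):ℝ) with hSdef
      have hSpos : 0 < S := rpow_pos_of_pos hQp _
      have i1 : (q p)^(-β-1) = (q p)^(-β-2) * q p := by
        rw [show -β-1 = (-β-2) + 1 from by ring, Real.rpow_add hQp, Real.rpow_one]
      have i2 : (q p)^(-β-1/2-2) = (q p)^(-β-2) * S := by
        rw [show -β-1/2-2 = (-β-2) + (-(1/2)) from by ring, Real.rpow_add hQp, hSdef]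
      have i3 : (q p)^(-β-1/2-1) = (q p)^(-β-2) * (q p * S) := by
        rw [show -β-1/2-1 = (-β-2) + (1 + (-(1/2))) from by ring, Real.rpow_add hQp,
          Real.rpow_add hQp, Real.rpow_one, hSdef]
      have hqp : q p = 1 + ‖p‖^2 := rfl
      have hr9 : (9:ℝ) ≤ ‖p‖ := by linarith only [hr₀9, hpr]
      have h81 : (81:ℝ) ≤ ‖p‖^2 := by nlinarith only [hr9]
      have hQ4 : q p ≤ 4*‖p‖^2 := by
        rw [hqp]; linarith only [h81]
      have hsq : Real.sqrt (q p) ≤ 2*‖p‖ := by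
        calc Real.sqrt (q p) ≤ Real.sqrt (4*‖p‖^2) := Real.sqrt_le_sqrt hQ4
          _ = 2*‖p‖ := by
            rw [show (4:ℝ)*‖p‖^2 = (2*‖p‖)^2 from by ring, Real.sqrt_sq (by linarith)]
      have hS_eq : S = (Real.sqrt (q p))⁻¹ := by
        rw [hSdef, Real.rpow_neg hQp.le, Real.sqrt_eq_rpow]
      have h2rS : 1 ≤ 2*‖p‖*S := by
        rw [hS_eq, ← div_eq_mul_inv]
        exact (one_le_div (Real.sqrt_pos.mpr hQp)).mpr hsq
      rw [lapη p, i1, i2, i3]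
      have hEpos : (0:ℝ) < (q p)^(-β-2) := rpow_pos_of_pos hQp _
      have harith : 1 ≤ -β*(-β-1)*(4*‖p‖^2) + 2*N*(-β)*(q p)
          + ((-β-1/2)*(-β-1/2-1)*S*(4*‖p‖^2) + 2*N*(-β-1/2)*(q p * S)) := by
        have hkey2 : (N-1)^2 ≤ S*((N-1)*(‖p‖^2-N)) := by
          have hr3N : 3*N < ‖p‖ := by rw [hr₀def] at hpr; exact hpr
          have g1 : 3*N*‖p‖ ≤ ‖p‖*‖p‖ :=
            mul_le_mul_of_nonneg_right hr3N.le hrpos.le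
          have g2 : (0:ℝ) ≤ N*(‖p‖-1) :=
            mul_nonneg (by linarith only [hN]) (by linarith only [hr9])
          have f2 : 0 ≤ ‖p‖^2 - N - 2*‖p‖*(N-1) := by nlinarith only [g1, g2, hN, hr9]
          have hln : 2*‖p‖*(N-1)^2 ≤ (N-1)*(‖p‖^2-N) := by
            have g3 := mul_nonneg (show (0:ℝ) ≤ N-1 by linarith only [hN]) f2
            nlinarith only [g3]
          have p1 : S*(2*‖p‖*(N-1)^2) ≤ S*((N-1)*(‖p‖^2-N)) :=
            mul_le_mul_of_nonneg_left hln hSpos.le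
          have p2 : 1*(N-1)^2 ≤ (2*‖p‖*S)*(N-1)^2 :=
            mul_le_mul_of_nonneg_right h2rS (sq_nonneg _)
          linarith only [p1, p2]
        rw [hβdef, hqp]
        linarith only [hkey2]
      calc (q p)^(-β-2) = (q p)^(-β-2) * 1 := by ring
        _ ≤ (q p)^(-β-2) * (-β*(-β-1)*(4*‖p‖^2) + 2*N*(-β)*(q p)
            + ((-β-1/2)*(-β-1/2-1)*S*(4*‖p‖^2) + 2*N*(-β-1/2)*(q p * S))) :=
            mul_le_mul_of_nonneg_left harith hEpos.le
        _ = -β*(-β-1)*((q p)^(-β-2))*(4*‖p‖^2) + 2*N*(-β)*((q p)^(-β-2) * q p)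
            + ((-β-1/2)*(-β-1/2-1)*((q p)^(-β-2)*S)*(4*‖p‖^2)
              + 2*N*(-β-1/2)*((q p)^(-β-2)*(q p * S))) := by ring
    have hfinal : lap w p < 0 := by
      rw [hlapw_eq]
      have h5 : m * (q p)^(-β-2) ≤ m * lap η p := mul_le_mul_of_nonneg_left hlapηp hm.le
      linarith [hstep]
    linarith [hlapw, hfinal]
  -- final assembly
  refine ⟨max 1 (max (-(Real.log m)/β) (-(u z'))), lt_of_lt_of_le one_pos (le_max_left _ _), ?_⟩
  intro x
  set C' : ℝ := max 1 (max (-(Real.log m)/β) (-(u z'))) with hC'def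
  rw [ge_iff_le]
  by_cases hx : ‖x‖ ≤ r₀
  · have h1 : u z' ≤ u x := hz'min x (mem_closedBall_zero_iff.mpr hx)
    have h2 : -(u z') ≤ C' :=
      le_trans (le_max_right _ _) (le_max_right 1 _)
    have h3 : 0 ≤ Real.log (‖x‖+1) := Real.log_nonneg (by linarith [norm_nonneg x])
    linarith
  · push_neg at hx
    have h1 := claim x hx.le
    have h2 : m * q x ^ (-β) ≤ v x :=
      le_trans (mul_le_mul_of_nonneg_left (hη_ge x) hm.le) h1
    have hQx : (0:ℝ) < q x ^ (-β) := rpow_pos_of_pos (hqpos x) _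
    have h3 : Real.log (m * q x ^ (-β)) ≤ Real.log (v x) :=
      Real.log_le_log (by positivity) h2
    have h4 : Real.log (v x) = β * u x := Real.log_exp _
    have h5 : Real.log (m * q x ^ (-β)) = Real.log m + (-β) * Real.log (q x) := by
      rw [Real.log_mul (ne_of_gt hm) (ne_of_gt hQx), Real.log_rpow (hqpos x)]
    have h6 : Real.log (q x) ≤ 2 * Real.log (‖x‖+1) := by
      have e1 : q x ≤ (‖x‖+1)^2 := by
        have : q x = 1+‖x‖^2 := rfl
        nlinarith [norm_nonneg x]
      calc Real.log (q x) ≤ Real.log ((‖x‖+1)^2) := Real.log_le_log (hqpos x) e1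
        _ = 2 * Real.log (‖x‖+1) := by
            rw [Real.log_pow]; push_cast; ring
    have h8 : Real.log m + (-β) * Real.log (q x) ≤ β * u x := by
      rw [← h5, ← h4]; exact h3
    have hlm : -(Real.log m)/β ≤ C' :=
      le_trans (le_max_left _ _) (le_max_right 1 _)
    have h9 : -(β * C') ≤ Real.log m := by
      have h10 := mul_le_mul_of_nonneg_left hlm hβ.le
      have h11 : β * (-(Real.log m)/β) = -(Real.log m) := by
        rw [mul_comm, div_mul_cancel₀ _ (ne_of_gt hβ)]
      rw [h11] at h10
      linarith
    have h11 : β * (-2*Real.log (‖x‖+1) - C') ≤ β * u x := by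
      have h12 : (-β) * Real.log (q x) ≥ (-β) * (2*Real.log (‖x‖+1)) := by
        have := mul_le_mul_of_nonneg_left h6 hβ.le
        linarith
      linarith [h8, h9, h12]
    have := le_of_mul_le_mul_left h11 hβ
    linarith

end
end
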